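/- arXiv:1612.08887 — 5 statements merged into one kernel-verified Lean document; each statement's English description precedes it below -/
import Mathlib

section
/- Proposition 4.13(1) of the paper, positive part. Let n ≥ 0, k ∈ ℤ, and let j be an integer with 0 ≤ j ≤ max{0, |k|−1}. Then in the formal power series ring R_{n+1}[[T]] one has the identity ( Π_{i=1}^{n+1} (1 − t_i^k T) ) · ( Σ_{m≥0} χ_{n,−km+j} T^m ) = B_{n,k}^j, where B_{n,k}^j ∈ R_{n+1}[T] is viewed as a power series. (Equivalently, Σ_{m≥0} χ_{n,−km+j} t^m = B_{n,k}^j · J_0(λ_{n+1}(k)).) -/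
open Finset

noncomputable section

/-- The Laurent polynomial `χ_{n,l}` of the paper, with `m = n + 1` variables, interpreted at
units `t 0, …, t (m-1)` of a commutative ring `A`.  For `l ≥ 0` it is the sum of all monomials
`t₁^{-r₁} ⋯ t_m^{-r_m}` with `r₁ + ⋯ + r_m = l`; it vanishes for `-m < l < 0`; and for
`l ≤ -m` it is `(-1)^(m-1) t₁⋯t_m` times the sum of all monomials of degree `-l - m`. -/
def chi {A : Type*} [CommRing A] (m : ℕ) (t : Fin m → Aˣ) (l : ℤ) : A :=
  if 0 ≤ l then
    ∑ r ∈ Finset.Nat.antidiagonalTuple m l.toNat, ∏ i, (((t i)⁻¹ : Aˣ) : A) ^ r i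
  else if -(m : ℤ) < l then 0
  else (-1 : A) ^ (m + 1) * (∏ i, ((t i : Aˣ) : A)) *
    ∑ r ∈ Finset.Nat.antidiagonalTuple m (-l - m).toNat, ∏ i, ((t i : Aˣ) : A) ^ r i

/-- The `d`-th elementary symmetric polynomial evaluated at `f 0, …, f (m-1)` (with `esymm m f 0 = 1`). -/
def esymm {A : Type*} [CommRing A] (m : ℕ) (f : Fin m → A) (d : ℕ) : A :=
  ∑ s ∈ Finset.powersetCard d (Finset.univ : Finset (Fin m)), ∏ i ∈ s, f i

/-- The family `t₁^k, …, t_m^k`. -/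
def tk {A : Type*} [CommRing A] {m : ℕ} (t : Fin m → Aˣ) (k : ℤ) : Fin m → A :=
  fun i => ((t i ^ k : Aˣ) : A)

/-- The coefficient of `T^l` in the polynomial `B_{n,k}^j` of the paper (with `m = n + 1`):
`Σ_{i=1}^{m-l} (-1)^{i+l+1} χ_{n, ik+j} s_{i+l}(t₁^k, …, t_m^k)`. -/
def Bcoeff {A : Type*} [CommRing A] (m : ℕ) (t : Fin m → Aˣ) (k j : ℤ) (l : ℕ) : A :=
  ∑ i ∈ Finset.Icc 1 (m - l),
    (-1 : A) ^ (i + l + 1) * chi m t ((i : ℤ) * k + j) * esymm m (tk t k) (i + l)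

/-- The polynomial `B_{n,k}^j = Σ_{l=0}^{n} Bcoeff l · T^l` of the paper (with `m = n + 1`). -/
def Bpoly {A : Type*} [CommRing A] (m : ℕ) (t : Fin m → Aˣ) (k j : ℤ) : Polynomial A :=
  ∑ l ∈ Finset.range m, Polynomial.C (Bcoeff m t k j l) * Polynomial.X ^ l

namespace ChiAux

variable {A : Type*} [CommRing A]

def hsum (m : ℕ) (f : Fin m → A) (N : ℕ) : A :=
  ∑ r ∈ Finset.Nat.antidiagonalTuple m N, ∏ i, f i ^ r i

lemma hsum_zero (m : ℕ) (f : Fin m → A) : hsum m f 0 = 1 := by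
  simp [hsum, Finset.Nat.antidiagonalTuple_zero_right]

lemma hsum_succ_var (m N : ℕ) (f : Fin (m + 1) → A) :
    hsum (m + 1) f N = ∑ p ∈ Finset.HasAntidiagonal.antidiagonal N, f 0 ^ p.1 * hsum m (f ∘ Fin.succ) p.2 := by
  unfold hsum
  simp_rw [Finset.mul_sum]
  rw [Finset.sum_sigma']
  refine Finset.sum_nbij' (fun r => (⟨(r 0, ∑ i : Fin m, r (Fin.succ i)), fun i => r (Fin.succ i)⟩ : (_ : ℕ × ℕ) × (Fin m → ℕ)))
    (fun x => Fin.cons x.1.1 x.2) ?_ ?_ ?_ ?_ ?_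
  · intro r hr
    simp only [Finset.Nat.mem_antidiagonalTuple, Finset.mem_sigma, Finset.HasAntidiagonal.mem_antidiagonal] at hr ⊢
    refine ⟨by rw [← hr, Fin.sum_univ_succ], by trivial⟩
  · rintro ⟨⟨a, b⟩, r⟩ h
    simp only [Finset.mem_sigma, Finset.HasAntidiagonal.mem_antidiagonal, Finset.Nat.mem_antidiagonalTuple] at h ⊢
    rw [Fin.sum_univ_succ]
    simp [h.2, h.1]
  · intro r hr
    simp only
    exact Fin.cons_self_tail r
  · rintro ⟨⟨a, b⟩, r⟩ h
    simp only [Finset.mem_sigma, Finset.HasAntidiagonal.mem_antidiagonal, Finset.Nat.mem_antidiagonalTuple] at h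
    have h2 : (Fin.cons a r : Fin (m+1) → ℕ) ∘ Fin.succ = r := by
      funext i; simp
    refine Sigma.ext ?_ ?_
    · simp only [Fin.cons_zero]
      congr 1 <;> simp [h2, h.2]
    · simp [h2]
  · intro r hr
    simp only
    rw [Fin.prod_univ_succ]
    rfl

lemma hsum_rec (m N : ℕ) (f : Fin (m + 1) → A) :
    hsum (m + 1) f (N + 1) = f 0 * hsum (m + 1) f N + hsum m (f ∘ Fin.succ) (N + 1) := by
  rw [hsum_succ_var, Finset.Nat.sum_antidiagonal_succ, hsum_succ_var m N]
  rw [Finset.mul_sum]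
  simp_rw [pow_succ, pow_zero, one_mul]
  rw [add_comm]
  congr 1
  exact Finset.sum_congr rfl fun p _ => by ring

lemma chi_of_nonneg (m : ℕ) (t : Fin m → Aˣ) {l : ℤ} (h : 0 ≤ l) :
    chi m t l = hsum m (fun i => (((t i)⁻¹ : Aˣ) : A)) l.toNat := if_pos h

lemma chi_of_gap (m : ℕ) (t : Fin m → Aˣ) {l : ℤ} (h1 : l < 0) (h2 : -(m : ℤ) < l) :
    chi m t l = 0 := by
  rw [chi, if_neg (by omega), if_pos h2]

lemma chi_of_le (m : ℕ) (t : Fin m → Aˣ) {l : ℤ} (h1 : l < 0) (h2 : ¬ -(m : ℤ) < l) :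
    chi m t l = (-1 : A) ^ (m + 1) * (∏ i, ((t i : Aˣ) : A)) *
      hsum m (fun i => ((t i : Aˣ) : A)) (-l - m).toNat := by
  rw [chi, if_neg (by omega), if_neg h2]; rfl

lemma chi_zero (m : ℕ) (t : Fin m → Aˣ) : chi m t 0 = 1 := by
  rw [chi_of_nonneg m t le_rfl, Int.toNat_zero, hsum_zero]

lemma chi_branch (m : ℕ) (t : Fin (m + 2) → Aˣ) (l : ℤ) :
    chi (m + 2) t l = (((t 0)⁻¹ : Aˣ) : A) * chi (m + 2) t (l - 1)
      + chi (m + 1) (t ∘ Fin.succ) l := by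
  have hinv : (((t 0)⁻¹ : Aˣ) : A) * ((t 0 : Aˣ) : A) = 1 := by
    rw [← Units.val_mul, inv_mul_cancel, Units.val_one]
  rcases (by omega : 1 ≤ l ∨ l = 0 ∨ (-((m : ℤ) + 1) < l ∧ l < 0) ∨ l = -((m : ℤ) + 1)
      ∨ l ≤ -((m : ℤ) + 2)) with h | h | h | h | h
  · obtain ⟨N, rfl⟩ : ∃ N : ℕ, l = (N : ℤ) + 1 := ⟨(l - 1).toNat, by omega⟩
    rw [chi_of_nonneg _ t (by omega), chi_of_nonneg _ t (by omega),
      chi_of_nonneg _ _ (by omega)]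
    have e1 : ((N : ℤ) + 1).toNat = N + 1 := by omega
    have e2 : ((N : ℤ) + 1 - 1).toNat = N := by omega
    rw [e1, e2, hsum_rec]
    rfl
  · subst h
    rw [chi_zero, chi_zero, chi_of_gap _ t (by omega) (by push_cast; omega)]
    ring
  · rw [chi_of_gap _ t h.2 (by push_cast; omega),
      chi_of_gap _ t (by omega) (by push_cast; omega),
      chi_of_gap _ _ h.2 (by push_cast; omega)]
    ring
  · subst h
    rw [chi_of_gap _ t (by push_cast; omega) (by push_cast; omega),
      chi_of_le _ t (by push_cast; omega) (by push_cast; omega),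
      chi_of_le _ _ (by push_cast; omega) (by push_cast; omega)]
    push_cast
    have e1 : (-(-((m : ℤ) + 1) - 1) - (m + 2)).toNat = 0 := by omega
    have e2 : (-(-((m : ℤ) + 1)) - (m + 1)).toNat = 0 := by omega
    rw [e1, e2, hsum_zero, hsum_zero, Fin.prod_univ_succ]
    rw [pow_succ ((-1 : A)) (m + 2)]
    simp only [Function.comp_apply]
    linear_combination ((-1 : A) ^ (m + 2) * ∏ i : Fin (m + 1), ((t i.succ : Aˣ) : A)) * hinv
  · obtain ⟨N, rfl⟩ : ∃ N : ℕ, l = -((m : ℤ) + 2) - N := ⟨(-l - (m + 2)).toNat, by omega⟩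
    rw [chi_of_le _ t (by push_cast; omega) (by push_cast; omega),
      chi_of_le _ t (by push_cast; omega) (by push_cast; omega),
      chi_of_le _ _ (by push_cast; omega) (by push_cast; omega)]
    push_cast
    have e1 : (-(-((m : ℤ) + 2) - N) - (m + 2)).toNat = N := by omega
    have e2 : (-(-((m : ℤ) + 2) - N - 1) - (m + 2)).toNat = N + 1 := by omega
    have e3 : (-(-((m : ℤ) + 2) - N) - (m + 1)).toNat = N + 1 := by omega
    rw [e1, e2, e3, hsum_rec, Fin.prod_univ_succ]
    rw [pow_succ ((-1 : A)) (m + 2)]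
    simp only [Function.comp_apply]
    set P' := ∏ i : Fin (m + 1), ((t i.succ : Aˣ) : A)
    set hN := hsum (m + 2) (fun i => ((t i : Aˣ) : A)) N
    set h'' := hsum (m + 1) ((fun i => ((t i : Aˣ) : A)) ∘ Fin.succ) (N + 1)
    have hc : hsum (m + 1) (fun i => ((t (Fin.succ i) : Aˣ) : A)) (N + 1) = h'' := rfl
    rw [hc]
    linear_combination ((-1 : A) ^ (m + 2) * P' * (((t 0 : Aˣ) : A) * hN + h'')) * hinv

-- step-κ telescoping of the branching rule
lemma chi_step (m : ℕ) (t : Fin (m + 2) → Aˣ) (κ : ℕ) (l : ℤ) :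
    chi (m + 2) t l = (((t 0)⁻¹ : Aˣ) : A) ^ κ * chi (m + 2) t (l - κ)
      + ∑ s ∈ Finset.range κ, (((t 0)⁻¹ : Aˣ) : A) ^ s * chi (m + 1) (t ∘ Fin.succ) (l - s) := by
  induction κ with
  | zero => simp
  | succ κ ih =>
    have e1 : l - ((κ : ℤ) + 1) = l - κ - 1 := by ring
    rw [ih, chi_branch m t (l - κ), Finset.sum_range_succ]
    push_cast
    rw [e1]
    ring

lemma chi_one (t : Fin 1 → Aˣ) (l : ℤ) : chi 1 t l = ((t 0 ^ (-l) : Aˣ) : A) := by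
  rcases le_or_gt 0 l with h | h
  · rw [chi_of_nonneg _ _ h]
    unfold hsum
    rw [Finset.Nat.antidiagonalTuple_one, Finset.sum_singleton, Fin.prod_univ_one]
    have e : -l = -(l.toNat : ℤ) := by omega
    rw [e, zpow_neg, zpow_natCast]
    simp [← inv_pow]
  · rw [chi_of_le _ _ h (by omega)]
    unfold hsum
    rw [Finset.Nat.antidiagonalTuple_one, Finset.sum_singleton, Fin.prod_univ_one,
      Fin.prod_univ_one]
    have e2 : ((t 0 ^ (-l) : Aˣ) : A) = ((t 0 : Aˣ) : A) * ((t 0 : Aˣ) : A) ^ (-l - 1).toNat := by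
      set N := (-l - 1).toNat with hN
      have e : -l = (N : ℤ) + 1 := by omega
      rw [e, show (N : ℤ) + 1 = ((N + 1 : ℕ) : ℤ) from by push_cast; ring,
        zpow_natCast, Units.val_pow_eq_pow_val, pow_succ]
      ring
    rw [e2]
    simp

-- esymm lemmas
lemma sum_powersetCard_succ_insert {ι : Type*} [DecidableEq ι] {a : ι} {s : Finset ι}
    (h : a ∉ s) (x : ι → A) (d : ℕ) :
    ∑ u ∈ Finset.powersetCard (d + 1) (insert a s), ∏ i ∈ u, x i
      = (∑ u ∈ Finset.powersetCard (d + 1) s, ∏ i ∈ u, x i)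
        + x a * ∑ u ∈ Finset.powersetCard d s, ∏ i ∈ u, x i := by
  rw [Finset.powersetCard_succ_insert h, Finset.sum_union ?disj]
  case disj =>
    rw [Finset.disjoint_left]
    intro u hu hu'
    obtain ⟨v, hv, rfl⟩ := Finset.mem_image.mp hu'
    exact h ((Finset.mem_powersetCard.mp hu).1 (Finset.mem_insert_self a v))
  congr 1
  rw [Finset.sum_image ?inj, Finset.mul_sum]
  · refine Finset.sum_congr rfl fun u hu => ?_
    have hau : a ∉ u := fun ha => h ((Finset.mem_powersetCard.mp hu).1 ha)
    rw [Finset.prod_insert hau]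
  case inj =>
    intro u hu v hv huv
    have hau : a ∉ u := fun ha => h ((Finset.mem_powersetCard.mp hu).1 ha)
    have hav : a ∉ v := fun ha => h ((Finset.mem_powersetCard.mp hv).1 ha)
    rw [← Finset.erase_insert hau, ← Finset.erase_insert hav, huv]

lemma sum_powersetCard_map {ι κ' : Type*} (f : ι ↪ κ') (s : Finset ι) (x : κ' → A) (d : ℕ) :
    ∑ u ∈ Finset.powersetCard d (s.map f), ∏ i ∈ u, x i
      = ∑ u ∈ Finset.powersetCard d s, ∏ i ∈ u, x (f i) := by
  rw [Finset.powersetCard_map, Finset.sum_map]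
  refine Finset.sum_congr rfl fun u _ => ?_
  rw [show (Finset.mapEmbedding f).toEmbedding u = u.map f from rfl, Finset.prod_map]

lemma esymm_zero' (m : ℕ) (x : Fin m → A) : esymm m x 0 = 1 := by simp [esymm]

lemma esymm_eq_zero (m d : ℕ) (h : m < d) (x : Fin m → A) : esymm m x d = 0 := by
  rw [esymm, Finset.powersetCard_eq_empty.mpr (by simpa), Finset.sum_empty]

lemma esymm_succ (m d : ℕ) (x : Fin (m + 1) → A) :
    esymm (m + 1) x (d + 1)
      = esymm m (x ∘ Fin.succ) (d + 1) + x 0 * esymm m (x ∘ Fin.succ) d := by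
  unfold esymm
  rw [Fin.univ_succ, Finset.cons_eq_insert,
    sum_powersetCard_succ_insert (by simp [Fin.succ_ne_zero]) x d,
    sum_powersetCard_map, sum_powersetCard_map]
  rfl

lemma esymm_one_one (x : Fin 1 → A) : esymm 1 x 1 = x 0 := by
  simp [esymm, Finset.powersetCard_one]

-- the ψ-lemma: chi (m+2) t l - x₀ chi (m+2) t (l + k) as a combination of (m+1)-variable chi's
lemma psi_eq (m : ℕ) (t : Fin (m + 2) → Aˣ) (k : ℤ) (l : ℤ) :
    chi (m + 2) t l - tk t k 0 * chi (m + 2) t (l + k)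
      = if 0 ≤ k then
          -∑ s ∈ Finset.range k.toNat, tk t k 0 * (((t 0)⁻¹ : Aˣ) : A) ^ s *
            chi (m + 1) (t ∘ Fin.succ) (l + k - s)
        else
          ∑ s ∈ Finset.range (-k).toNat, (((t 0)⁻¹ : Aˣ) : A) ^ s *
            chi (m + 1) (t ∘ Fin.succ) (l - s) := by
  rcases le_or_gt 0 k with hk | hk
  · rw [if_pos hk]
    have hκ : (k.toNat : ℤ) = k := Int.toNat_of_nonneg hk
    have h1 : chi (m + 2) t (l + k) = (((t 0)⁻¹ : Aˣ) : A) ^ k.toNat * chi (m + 2) t l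
        + ∑ s ∈ Finset.range k.toNat, (((t 0)⁻¹ : Aˣ) : A) ^ s *
            chi (m + 1) (t ∘ Fin.succ) (l + k - s) := by
      have := chi_step m t k.toNat (l + k)
      rwa [show l + k - (k.toNat : ℤ) = l from by rw [hκ]; ring] at this
    have hxu : (t 0 ^ k * ((t 0)⁻¹) ^ k.toNat : Aˣ) = 1 := by
      rw [inv_pow, ← zpow_natCast, hκ, mul_inv_cancel]
    have hx : tk t k 0 * (((t 0)⁻¹ : Aˣ) : A) ^ k.toNat = 1 := by
      simp only [tk]
      rw [← Units.val_pow_eq_pow_val, ← Units.val_mul, hxu, Units.val_one]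
    rw [h1, mul_add, ← mul_assoc, hx, one_mul, Finset.mul_sum]
    rw [sub_add_eq_sub_sub, sub_self, zero_sub]
    exact congrArg Neg.neg (Finset.sum_congr rfl fun s _ => by ring)
  · rw [if_neg (by omega)]
    have hκ : ((-k).toNat : ℤ) = -k := Int.toNat_of_nonneg (by omega)
    have hx : tk t k 0 = (((t 0)⁻¹ : Aˣ) : A) ^ (-k).toNat := by
      simp only [tk]
      rw [← Units.val_pow_eq_pow_val]
      congr 1
      rw [← zpow_natCast, hκ, zpow_neg, ← inv_zpow, inv_inv]
    have h1 := chi_step m t (-k).toNat l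
    rw [show l - ((-k).toNat : ℤ) = l + k from by rw [hκ]; ring] at h1
    rw [hx, h1]
    ring

lemma key (k : ℤ) : ∀ (m : ℕ) (t : Fin (m + 1) → Aˣ) (c : ℤ),
    ∑ d ∈ Finset.range (m + 2),
      (-1 : A) ^ d * esymm (m + 1) (tk t k) d * chi (m + 1) t (k * d + c) = 0 := by
  intro m
  induction m with
  | zero =>
    intro t c
    rw [Finset.sum_range_succ, Finset.sum_range_one, chi_one, chi_one, esymm_zero',
      esymm_one_one]
    have h1 : tk t k 0 * ((t 0 ^ (-(k * (1 : ℕ) + c)) : Aˣ) : A) = ((t 0 ^ (-(k * (0 : ℕ) + c)) : Aˣ) : A) := by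
      simp only [tk]
      rw [← Units.val_mul, ← zpow_add]
      congr 2
      push_cast
      ring
    push_cast at h1 ⊢
    linear_combination -h1
  | succ m ih =>
    intro t c
    set x0 := tk t k 0 with hx0
    set e' : ℕ → A := fun d => esymm (m + 1) (tk (t ∘ Fin.succ) k) d with he'
    have htk : tk t k ∘ Fin.succ = tk (t ∘ Fin.succ) k := rfl
    -- Step A+B+C: rewrite the sum as a sum of psi-terms
    set eP : ℕ → A := fun d => Nat.rec (0 : A) (fun d' _ => e' d') d with heP
    have heP0 : eP 0 = 0 := rfl
    have hePs : ∀ d, eP (d + 1) = e' d := fun d => rfl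
    have hE : ∀ d, esymm (m + 2) (tk t k) (d + 1) = e' (d + 1) + x0 * e' d := by
      intro d
      rw [esymm_succ (m + 1) d (tk t k), htk]
    have hE2 : ∀ d, esymm (m + 2) (tk t k) d = e' d + x0 * eP d := by
      intro d
      cases d with
      | zero =>
        rw [esymm_zero', heP0, show e' 0 = 1 from esymm_zero' _ _]
        ring
      | succ d => rw [hE d, hePs]
    have hUW : ∑ d ∈ Finset.range (m + 3),
          (-1 : A) ^ d * esymm (m + 2) (tk t k) d * chi (m + 2) t (k * d + c)
        = (∑ d ∈ Finset.range (m + 3), (-1 : A) ^ d * e' d * chi (m + 2) t (k * d + c))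
          + ∑ d ∈ Finset.range (m + 3), (-1 : A) ^ d * (x0 * eP d) * chi (m + 2) t (k * d + c) := by
      rw [← Finset.sum_add_distrib]
      exact Finset.sum_congr rfl fun d _ => by rw [hE2 d]; ring
    have hU : ∑ d ∈ Finset.range (m + 3), (-1 : A) ^ d * e' d * chi (m + 2) t (k * d + c)
        = ∑ d ∈ Finset.range (m + 2), (-1 : A) ^ d * e' d * chi (m + 2) t (k * d + c) := by
      rw [Finset.sum_range_succ, show e' (m + 2) = 0 from esymm_eq_zero _ _ (by omega) _]
      ring
    have hW : ∑ d ∈ Finset.range (m + 3), (-1 : A) ^ d * (x0 * eP d) * chi (m + 2) t (k * d + c)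
        = ∑ d ∈ Finset.range (m + 2),
            -((-1 : A) ^ d * (x0 * e' d) * chi (m + 2) t (k * d + c + k)) := by
      rw [Finset.sum_range_succ'
        (fun d => (-1 : A) ^ d * (x0 * eP d) * chi (m + 2) t (k * d + c)) (m + 2)]
      have h0 : ((-1 : A)) ^ (0 : ℕ) * (x0 * eP 0) * chi (m + 2) t (k * ((0 : ℕ) : ℤ) + c) = 0 := by
        rw [heP0]; ring
      rw [h0, add_zero]
      refine Finset.sum_congr rfl fun d _ => ?_
      rw [hePs d]
      push_cast
      rw [show k * ((d : ℤ) + 1) + c = k * d + c + k from by ring, pow_succ]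
      ring
    have hG : ∑ d ∈ Finset.range (m + 3),
        (-1 : A) ^ d * esymm (m + 2) (tk t k) d * chi (m + 2) t (k * d + c)
        = ∑ d ∈ Finset.range (m + 2), (-1 : A) ^ d * e' d *
            (chi (m + 2) t (k * d + c) - x0 * chi (m + 2) t (k * d + c + k)) := by
      rw [hUW, hU, hW, ← Finset.sum_add_distrib]
      exact Finset.sum_congr rfl fun d _ => by ring
    rw [hG]
    -- Step D: use psi_eq and the inductive hypothesis
    rcases le_or_gt 0 k with hk | hk
    · calc ∑ d ∈ Finset.range (m + 2), (-1 : A) ^ d * e' d *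
            (chi (m + 2) t (k * d + c) - x0 * chi (m + 2) t (k * d + c + k))
          = ∑ d ∈ Finset.range (m + 2), ∑ s ∈ Finset.range k.toNat,
              -(x0 * (((t 0)⁻¹ : Aˣ) : A) ^ s *
                ((-1 : A) ^ d * e' d * chi (m + 1) (t ∘ Fin.succ) (k * d + (c + k - s)))) := by
            refine Finset.sum_congr rfl fun d _ => ?_
            rw [psi_eq m t k (k * d + c), if_pos hk, mul_neg, Finset.mul_sum,
              ← Finset.sum_neg_distrib]
            refine Finset.sum_congr rfl fun s _ => ?_
            rw [show k * (d : ℤ) + c + k - s = k * d + (c + k - s) from by ring]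
            ring
        _ = ∑ s ∈ Finset.range k.toNat, -(x0 * (((t 0)⁻¹ : Aˣ) : A) ^ s *
              ∑ d ∈ Finset.range (m + 2),
                (-1 : A) ^ d * e' d * chi (m + 1) (t ∘ Fin.succ) (k * d + (c + k - s))) := by
            rw [Finset.sum_comm]
            refine Finset.sum_congr rfl fun s _ => ?_
            rw [Finset.mul_sum, ← Finset.sum_neg_distrib]
        _ = 0 := by
            refine Finset.sum_eq_zero fun s _ => ?_
            rw [he', ih (t ∘ Fin.succ) (c + k - s)]
            ring
    · calc ∑ d ∈ Finset.range (m + 2), (-1 : A) ^ d * e' d *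
            (chi (m + 2) t (k * d + c) - x0 * chi (m + 2) t (k * d + c + k))
          = ∑ d ∈ Finset.range (m + 2), ∑ s ∈ Finset.range (-k).toNat,
              (((t 0)⁻¹ : Aˣ) : A) ^ s *
                ((-1 : A) ^ d * e' d * chi (m + 1) (t ∘ Fin.succ) (k * d + (c - s))) := by
            refine Finset.sum_congr rfl fun d _ => ?_
            rw [psi_eq m t k (k * d + c), if_neg (by omega)]
            rw [Finset.mul_sum]
            refine Finset.sum_congr rfl fun s _ => ?_
            rw [show k * (d : ℤ) + c - s = k * d + (c - s) from by ring]
            ring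
        _ = ∑ s ∈ Finset.range (-k).toNat, (((t 0)⁻¹ : Aˣ) : A) ^ s *
              ∑ d ∈ Finset.range (m + 2),
                (-1 : A) ^ d * e' d * chi (m + 1) (t ∘ Fin.succ) (k * d + (c - s)) := by
            rw [Finset.sum_comm]
            refine Finset.sum_congr rfl fun s _ => ?_
            rw [Finset.mul_sum]
        _ = 0 := by
            refine Finset.sum_eq_zero fun s _ => ?_
            rw [he', ih (t ∘ Fin.succ) (c - s)]
            ring

lemma prod_one_sub {ι : Type*} [DecidableEq ι] (s : Finset ι) (x : ι → A) :
    (∏ i ∈ s, (1 - PowerSeries.C (x i) * PowerSeries.X))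
      = ∑ d ∈ Finset.range (s.card + 1),
          PowerSeries.C ((-1 : A) ^ d * ∑ u ∈ Finset.powersetCard d s, ∏ i ∈ u, x i)
            * PowerSeries.X ^ d := by
  induction s using Finset.induction_on with
  | empty => simp
  | @insert a s ha ih =>
    rw [Finset.prod_insert ha, ih, Finset.card_insert_of_notMem ha]
    set E : ℕ → A := fun d => ∑ u ∈ Finset.powersetCard d s, ∏ i ∈ u, x i with hE
    set eP : ℕ → A := fun d => Nat.rec (0 : A) (fun d' _ => E d') d with heP
    have heP0 : eP 0 = 0 := rfl
    have hePs : ∀ d, eP (d + 1) = E d := fun d => rfl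
    have hE2 : ∀ d, ∑ u ∈ Finset.powersetCard d (insert a s), ∏ i ∈ u, x i
        = E d + x a * eP d := by
      intro d
      cases d with
      | zero => simp [heP0, hE, Finset.powersetCard_zero]
      | succ d => rw [sum_powersetCard_succ_insert ha x d, hePs]
    have hsplit : ∀ d : ℕ, PowerSeries.C ((-1 : A) ^ d *
          ∑ u ∈ Finset.powersetCard d (insert a s), ∏ i ∈ u, x i) * PowerSeries.X ^ d
        = PowerSeries.C ((-1 : A) ^ d * E d) * PowerSeries.X ^ d
          + PowerSeries.C ((-1 : A) ^ d * (x a * eP d)) * PowerSeries.X ^ d := by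
      intro d
      rw [hE2 d, show (-1 : A) ^ d * (E d + x a * eP d)
        = (-1 : A) ^ d * E d + (-1 : A) ^ d * (x a * eP d) from by ring, map_add, add_mul]
    rw [Finset.sum_congr rfl fun d _ => hsplit d, Finset.sum_add_distrib]
    have hfirst : ∑ d ∈ Finset.range (s.card + 1 + 1),
        PowerSeries.C ((-1 : A) ^ d * E d) * PowerSeries.X ^ d
        = ∑ d ∈ Finset.range (s.card + 1),
            PowerSeries.C ((-1 : A) ^ d * E d) * PowerSeries.X ^ d := by
      rw [Finset.sum_range_succ]
      have : E (s.card + 1) = 0 := by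
        rw [hE]
        simp only []
        rw [Finset.powersetCard_eq_empty.mpr (by omega), Finset.sum_empty]
      rw [this]
      simp
    have hsecond : ∑ d ∈ Finset.range (s.card + 1 + 1),
        PowerSeries.C ((-1 : A) ^ d * (x a * eP d)) * PowerSeries.X ^ d
        = -(PowerSeries.C (x a) * PowerSeries.X) *
            ∑ d ∈ Finset.range (s.card + 1),
              PowerSeries.C ((-1 : A) ^ d * E d) * PowerSeries.X ^ d := by
      rw [Finset.sum_range_succ'
        (fun d => PowerSeries.C ((-1 : A) ^ d * (x a * eP d)) * PowerSeries.X ^ d) (s.card + 1)]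
      have h0 : PowerSeries.C ((-1 : A) ^ (0 : ℕ) * (x a * eP 0)) * PowerSeries.X ^ (0 : ℕ)
          = 0 := by
        rw [heP0]
        simp
      rw [h0, add_zero, Finset.mul_sum]
      refine Finset.sum_congr rfl fun d _ => ?_
      rw [hePs d]
      rw [show (-1 : A) ^ (d + 1) * (x a * E d) = -(x a * ((-1 : A) ^ d * E d)) from by
        rw [pow_succ]; ring]
      rw [map_neg, map_mul]
      rw [pow_succ]
      ring
    rw [hfirst, hsecond]
    ring

lemma coeff_sum_C_X_pow (N : ℕ) (b : ℕ → A) (a : ℕ) :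
    PowerSeries.coeff a (∑ l ∈ Finset.range N, PowerSeries.C (b l) * PowerSeries.X ^ l)
      = if a < N then b a else 0 := by
  rw [map_sum]
  have : ∀ l ∈ Finset.range N, PowerSeries.coeff a (PowerSeries.C (b l) * PowerSeries.X ^ l)
      = if l = a then b l else 0 := by
    intro l _
    rw [PowerSeries.coeff_C_mul, PowerSeries.coeff_X_pow]
    by_cases h : a = l <;> simp [h, eq_comm]
  rw [Finset.sum_congr rfl this, Finset.sum_ite_eq' (Finset.range N) a b]
  simp [Finset.mem_range]

lemma coeff_prod_one_sub (n : ℕ) (t : Fin (n + 1) → Aˣ) (k : ℤ) (a : ℕ) :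
    PowerSeries.coeff a
        (∏ i, (1 - PowerSeries.C ((t i ^ k : Aˣ) : A) * PowerSeries.X))
      = (-1 : A) ^ a * esymm (n + 1) (tk t k) a := by
  rw [prod_one_sub (Finset.univ : Finset (Fin (n + 1))) (fun i => ((t i ^ k : Aˣ) : A))]
  rw [show (Finset.univ : Finset (Fin (n + 1))).card = n + 1 by simp]
  rw [coeff_sum_C_X_pow (n + 2) (fun d => (-1 : A) ^ d *
    ∑ u ∈ Finset.powersetCard d (Finset.univ : Finset (Fin (n + 1))), ∏ i ∈ u, ((t i ^ k : Aˣ) : A)) a]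
  by_cases h : a < n + 2
  · rw [if_pos h]; rfl
  · rw [if_neg h, esymm_eq_zero (n + 1) a (by omega)]
    ring

end ChiAux

open ChiAux

/-- Proposition 4.13(1) of the paper, positive part.  For `n ≥ 0`, `k ∈ ℤ`
and `0 ≤ j ≤ max 0 (|k| - 1)`, in the formal power series ring one has
`(Π_{i=1}^{n+1} (1 - t_i^k T)) · (Σ_{m≥0} χ_{n,-km+j} T^m) = B_{n,k}^j`. -/
theorem generating_series_positive_part {A : Type*} [CommRing A]
    (n : ℕ) (k j : ℤ) (hj0 : 0 ≤ j) (hj1 : j ≤ max 0 (|k| - 1))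
    (t : Fin (n + 1) → Aˣ) :
    (∏ i, (1 - PowerSeries.C ((t i ^ k : Aˣ) : A) * PowerSeries.X)) *
        PowerSeries.mk (fun m => chi (n + 1) t (-k * (m : ℤ) + j)) =
      ∑ l ∈ Finset.range (n + 1),
        PowerSeries.C (Bcoeff (n + 1) t k j l) * PowerSeries.X ^ l := by
  apply PowerSeries.ext
  intro M
  rw [PowerSeries.coeff_mul, coeff_sum_C_X_pow (n + 1) (fun l => Bcoeff (n + 1) t k j l) M]
  have hterm : ∀ p ∈ Finset.HasAntidiagonal.antidiagonal M,
      PowerSeries.coeff p.1 (∏ i, (1 - PowerSeries.C ((t i ^ k : Aˣ) : A) * PowerSeries.X)) *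
        PowerSeries.coeff p.2 (PowerSeries.mk (fun m => chi (n + 1) t (-k * (m : ℤ) + j)))
      = (-1 : A) ^ p.1 * esymm (n + 1) (tk t k) p.1 * chi (n + 1) t (-k * (p.2 : ℤ) + j) := by
    intro p _
    rw [coeff_prod_one_sub, PowerSeries.coeff_mk, mul_assoc]
  rw [Finset.sum_congr rfl hterm,
    Finset.Nat.sum_antidiagonal_eq_sum_range_succ_mk
      (fun p => (-1 : A) ^ p.1 * esymm (n + 1) (tk t k) p.1 * chi (n + 1) t (-k * (p.2 : ℤ) + j)) M]
  have hre : ∀ a ∈ Finset.range (M + 1),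
      (-1 : A) ^ a * esymm (n + 1) (tk t k) a * chi (n + 1) t (-k * ((M - a : ℕ) : ℤ) + j)
      = (-1 : A) ^ a * esymm (n + 1) (tk t k) a * chi (n + 1) t (k * a + (j - k * M)) := by
    intro a ha
    rw [Finset.mem_range] at ha
    rw [show (-k * ((M - a : ℕ) : ℤ) + j) = k * a + (j - k * M) from by
      rw [Nat.cast_sub (by omega)]; ring]
  rw [Finset.sum_congr rfl hre]
  set c := j - k * M with hc
  set F : ℕ → A := fun a =>
    (-1 : A) ^ a * esymm (n + 1) (tk t k) a * chi (n + 1) t (k * a + c) with hF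
  have hkey : ∑ d ∈ Finset.range (n + 2), F d = 0 := key k n t c
  by_cases hM : M < n + 1
  · rw [if_pos hM]
    have hsplit : ∑ d ∈ Finset.range (n + 2), F d
        = (∑ d ∈ Finset.range (M + 1), F d) + ∑ d ∈ Finset.Ico (M + 1) (n + 2), F d := by
      rw [Finset.range_eq_Ico, Finset.range_eq_Ico]
      exact (Finset.sum_Ico_consecutive F (m := 0) (n := M + 1) (k := n + 2) (by omega) (by omega)).symm
    have h1 : ∑ d ∈ Finset.range (M + 1), F d = -∑ d ∈ Finset.Ico (M + 1) (n + 2), F d := by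
      rw [hsplit] at hkey
      linear_combination hkey
    rw [h1]
    rw [show Bcoeff (n + 1) t k j M
        = ∑ i ∈ Finset.Icc 1 (n + 1 - M), (-1 : A) ^ (i + M + 1) *
            chi (n + 1) t ((i : ℤ) * k + j) * esymm (n + 1) (tk t k) (i + M) from rfl]
    rw [← Finset.sum_neg_distrib]
    refine Finset.sum_nbij' (fun a => a - M) (fun i => i + M) ?_ ?_ ?_ ?_ ?_
    · intro a ha
      simp only [Finset.mem_Ico, Finset.mem_Icc] at ha ⊢
      omega
    · intro i hi
      simp only [Finset.mem_Ico, Finset.mem_Icc] at hi ⊢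
      omega
    · intro a ha
      simp only [Finset.mem_Ico] at ha
      omega
    · intro i hi
      simp only [Finset.mem_Icc] at hi
      omega
    · intro a ha
      simp only [Finset.mem_Ico] at ha
      rw [hF]
      simp only []
      rw [show a - M + M = a from by omega]
      rw [show ((a - M : ℕ) : ℤ) * k + j = k * a + c from by
        rw [Nat.cast_sub (by omega), hc]; ring]
      rw [pow_succ]
      ring
  · rw [if_neg hM]
    have hzero : ∀ d ∈ Finset.range (M + 1), d ∉ Finset.range (n + 2) → F d = 0 := by
      intro d _ hd
      rw [Finset.mem_range, not_lt] at hd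
      rw [hF]
      simp only []
      rw [esymm_eq_zero (n + 1) d (by omega)]
      ring
    rw [← Finset.sum_subset (Finset.range_subset_range.mpr (by omega)) hzero, hkey]
end
end

section
/- Proposition 4.13(2) of the paper, negative part, reformulated as a power series identity in the variable S = t^{−1}. Let n ≥ 0, k ∈ ℤ, and let j be an integer with 0 ≤ j ≤ max{0, |k|−1}. For 0 ≤ l ≤ n let b_l^{(j)} ∈ R_{n+1} denote the coefficient of T^l in B_{n,k}^j. Then in the formal power series ring R_{n+1}[[S]] one has ( Π_{i=1}^{n+1} (1 − t_i^{−k} S) ) · ( Σ_{m≥1} χ_{n,km+j} S^m ) = (−1)^n (t₁⋯t_{n+1})^{−k} Σ_{l=0}^{n} b_l^{(j)} S^{n+1−l}. (This is equivalent to the paper's identity Σ_{m<0} χ_{n,−km+j} t^m = −B_{n,k}^j · J_∞(λ_{n+1}(k)) after substituting t = S^{−1} and clearing denominators.) -/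
open Finset

noncomputable section

section Part1
variable {A : Type*} [CommRing A] {m : ℕ}

lemma sum_powersetCard_compl {B : Type*} [AddCommMonoid B] {d : ℕ} (hd : d ≤ m)
    (f : Finset (Fin m) → B) :
    ∑ s ∈ powersetCard d (univ : Finset (Fin m)), f sᶜ
      = ∑ s ∈ powersetCard (m - d) (univ : Finset (Fin m)), f s := by
  refine sum_nbij' (fun s => sᶜ) (fun s => sᶜ) ?_ ?_ ?_ ?_ ?_ <;>
    simp +contextual [mem_powersetCard_univ, card_compl]
  omega

lemma esymm_zero (f : Fin m → A) : esymm m f 0 = 1 := by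
  simp [esymm]

lemma esymm_self (f : Fin m → A) : esymm m f m = ∏ i, f i := by
  have h : powersetCard m (univ : Finset (Fin m)) = {univ} := by
    simpa using powersetCard_self (univ : Finset (Fin m))
  rw [esymm, h, sum_singleton]

lemma esymm_gt (f : Fin m → A) {d : ℕ} (hd : m < d) : esymm m f d = 0 := by
  rw [esymm, powersetCard_eq_empty.2 (by simpa using hd), sum_empty]

/-- duality: `e_{m-d}(u) = (∏ u) * e_d(u⁻¹)`. -/
lemma esymm_units_compl (u : Fin m → Aˣ) {d : ℕ} (hd : d ≤ m) :
    esymm m (fun i => ((u i : Aˣ) : A)) (m - d)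
      = (∏ i, ((u i : Aˣ) : A)) * esymm m (fun i => (((u i)⁻¹ : Aˣ) : A)) d := by
  rw [esymm, esymm, mul_sum, ← sum_powersetCard_compl hd]
  refine sum_congr rfl fun s hs => ?_
  rw [← prod_mul_prod_compl s (fun i => ((u i : Aˣ) : A)), mul_assoc, mul_comm, mul_assoc,
    ← prod_mul_distrib]
  have : ∀ i, (((u i)⁻¹ : Aˣ) : A) * ((u i : Aˣ) : A) = 1 := fun i => by
    rw [← Units.val_mul, inv_mul_cancel, Units.val_one]
  simp [this]

/-- expansion of `∏ (y - cᵢ x)` by elementary symmetric functions. -/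
lemma prod_sub_expand (y x : A) (c : Fin m → A) :
    ∏ i, (y - c i * x)
      = ∑ d ∈ range (m + 1), (-1 : A) ^ d * esymm m c d * (y ^ (m - d) * x ^ d) := by
  have h : ∀ i : Fin m, y - c i * x = y + (-(c i) * x) := fun i => by ring
  calc ∏ i, (y - c i * x) = ∑ s ∈ (univ : Finset (Fin m)).powerset,
        (∏ _i ∈ s, y) * ∏ i ∈ univ \ s, (-(c i) * x) := by
        simp_rw [h]; exact prod_add _ _ _
    _ = ∑ d ∈ range (m + 1), ∑ s ∈ powersetCard d (univ : Finset (Fin m)),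
        (∏ _i ∈ s, y) * ∏ i ∈ univ \ s, (-(c i) * x) := by
        rw [sum_powerset]; simp
    _ = ∑ d ∈ range (m + 1), (-1 : A) ^ (m - d) * esymm m c (m - d) * (y ^ d * x ^ (m - d)) := by
        refine sum_congr rfl fun d hd => ?_
        have hdm : d ≤ m := by simpa using Nat.lt_succ_iff.mp (mem_range.mp hd)
        rw [esymm, ← sum_powersetCard_compl hdm]
        rw [show ((-1:A)^(m-d) * ∑ s ∈ powersetCard d (univ : Finset (Fin m)), ∏ i ∈ sᶜ, c i) *
            (y^d * x^(m-d)) = ∑ s ∈ powersetCard d (univ : Finset (Fin m)),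
              ((-1:A)^(m-d) * ∏ i ∈ sᶜ, c i) * (y^d * x^(m-d)) by rw [mul_sum, sum_mul]]
        refine sum_congr rfl fun s hs => ?_
        have hcard : #s = d := mem_powersetCard_univ.mp hs
        have hcc : #(univ \ s) = m - d := by
          rw [sdiff_eq_inter_compl, univ_inter, card_compl, Fintype.card_fin, hcard]
        rw [prod_const, hcard, compl_eq_univ_sdiff]
        have : ∏ i ∈ univ \ s, (-(c i) * x) = (-1:A)^(m-d) * (∏ i ∈ univ \ s, c i) * x^(m-d) := by
          rw [prod_mul_distrib, prod_const, ← hcc]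
          congr 1
          calc ∏ i ∈ univ \ s, -c i = ∏ i ∈ univ \ s, ((-1 : A) * c i) := by
                refine prod_congr rfl fun i _ => by ring
            _ = _ := by rw [prod_mul_distrib, prod_const]
        rw [this]
        ring
    _ = _ := by
        rw [← sum_range_reflect (fun d => (-1 : A) ^ d * esymm m c d * (y ^ (m - d) * x ^ d))
          (m + 1)]
        refine sum_congr rfl fun d hd => ?_
        have hdm : d ≤ m := by simpa using Nat.lt_succ_iff.mp (mem_range.mp hd)
        have h1 : m + 1 - 1 - d = m - d := by omega
        have h2 : m - (m - d) = d := by omega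
        rw [h1, h2]
end Part1

section Part2
open PowerSeries
variable {A : Type*} [CommRing A] {m : ℕ}

def hpow (m : ℕ) (u : Fin m → A) (l : ℕ) : A :=
  ∑ r ∈ Finset.Nat.antidiagonalTuple m l, ∏ i, u i ^ r i

lemma hpow_zero (u : Fin m → A) : hpow m u 0 = 1 := by
  simp [hpow, Nat.antidiagonalTuple_zero_right]

lemma geom_mul (a : A) :
    (1 - PowerSeries.C a * X) * PowerSeries.mk (fun r => a ^ r) = 1 := by
  ext N
  rcases N with _ | N
  · simp
  · simp only [sub_mul, one_mul, map_sub, coeff_one, Nat.succ_ne_zero, if_false]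
    rw [mul_assoc, coeff_C_mul, coeff_succ_X_mul, coeff_mk, coeff_mk, pow_succ']
    ring

lemma mk_hpow_eq_prod (u : Fin m → A) :
    PowerSeries.mk (hpow m u) = ∏ i, PowerSeries.mk (fun r => u i ^ r) := by
  ext N
  rw [coeff_mk, coeff_prod, hpow]
  refine sum_nbij' (fun r => Finsupp.equivFunOnFinite.symm r) (fun l => ⇑l) ?_ ?_ ?_ ?_ ?_
  · intro r hr
    rw [mem_finsuppAntidiag]
    constructor
    · rw [Finset.sum_congr rfl (fun i _ => rfl)]
      simpa [Finsupp.sum] using (Finset.Nat.mem_antidiagonalTuple.mp hr)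
    · exact subset_univ _
  · intro l hl
    rw [Finset.Nat.mem_antidiagonalTuple]
    have := (mem_finsuppAntidiag.mp hl).1
    simpa using this
  · intro r _; rfl
  · intro l _; exact Finsupp.equivFunOnFinite_symm_coe l
  · intro r _
    refine prod_congr rfl fun i _ => by rw [coeff_mk]; rfl

lemma prod_one_sub_mul_mk_hpow (u : Fin m → A) :
    (∏ i, (1 - PowerSeries.C (u i) * X)) * PowerSeries.mk (hpow m u) = 1 := by
  rw [mk_hpow_eq_prod, ← prod_mul_distrib]
  rw [Finset.prod_congr rfl fun i _ => geom_mul (u i), prod_const_one]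

/-- key coefficient formula. -/
lemma coeff_prod_one_sub_mul (u : Fin m → A) (G : PowerSeries A) (N : ℕ) :
    PowerSeries.coeff N ((∏ i, (1 - PowerSeries.C (u i) * X)) * G)
      = ∑ d ∈ range (m + 1), (-1 : A) ^ d * esymm m u d *
          (if d ≤ N then PowerSeries.coeff (N - d) G else 0) := by
  have hexp : (∏ i, (1 - PowerSeries.C (u i) * X))
      = ∑ d ∈ range (m + 1), PowerSeries.C ((-1 : A) ^ d * esymm m u d) * X ^ d := by
    have := prod_sub_expand (1 : PowerSeries A) X (fun i => PowerSeries.C (u i))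
    rw [this]
    refine sum_congr rfl fun d hd => ?_
    have : esymm m (fun i => PowerSeries.C (u i)) d = PowerSeries.C (esymm m u d) := by
      simp [esymm, map_sum, map_prod]
    rw [this, one_pow, one_mul, map_mul, map_pow, map_neg, map_one]
  rw [hexp, sum_mul]
  rw [map_sum]
  refine sum_congr rfl fun d hd => ?_
  rw [show PowerSeries.C ((-1:A)^d * esymm m u d) * X ^ d * G
      = PowerSeries.C ((-1:A)^d * esymm m u d) * G * X ^ d by ring,
    coeff_mul_X_pow', coeff_C_mul]
  split <;> simp [mul_assoc]

/-- recurrence for `hpow` at positive degree. -/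
lemma hrec (u : Fin m → A) {N : ℕ} (hN : 1 ≤ N) :
    ∑ d ∈ range (m + 1), (-1 : A) ^ d * esymm m u d *
      (if d ≤ N then hpow m u (N - d) else 0) = 0 := by
  have h := coeff_prod_one_sub_mul u (PowerSeries.mk (hpow m u)) N
  rw [prod_one_sub_mul_mk_hpow, coeff_one, if_neg (by omega)] at h
  refine Eq.trans (sum_congr rfl fun d hd => ?_) h.symm
  congr 1
  split <;> simp

end Part2

section Part3
open Polynomial
variable {A : Type*} [CommRing A] {m : ℕ}

def seval (a : ℤ → A) (l : ℤ) (p : Polynomial A) : A :=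
  p.sum fun e c => c * a (l + e)

lemma seval_zero (a : ℤ → A) (l : ℤ) : seval a l 0 = 0 := Polynomial.sum_zero_index _

lemma seval_add (a : ℤ → A) (l : ℤ) (p q : Polynomial A) :
    seval a l (p + q) = seval a l p + seval a l q :=
  Polynomial.sum_add_index p q _ (fun _ => zero_mul _) (fun _ _ _ => add_mul _ _ _)

lemma seval_monomial (a : ℤ → A) (l : ℤ) (e : ℕ) (r : A) :
    seval a l (monomial e r) = r * a (l + e) :=
  Polynomial.sum_monomial_index _ _ (zero_mul _)

lemma seval_mul_monomial (a : ℤ → A) (l : ℤ) (d : ℕ) (r : A) (p : Polynomial A) :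
    seval a l (p * monomial d r) = r * seval a (l + d) p := by
  induction p using Polynomial.induction_on' with
  | add p q hp hq => rw [add_mul, seval_add, seval_add, hp, hq, mul_add]
  | monomial e c =>
    rw [monomial_mul_monomial, seval_monomial, seval_monomial]
    have : l + ((e + d : ℕ) : ℤ) = l + d + e := by push_cast; ring
    rw [this]; ring

lemma seval_kill (a : ℤ → A) (Q : Polynomial A) (hQ : ∀ l, seval a l Q = 0) (p : Polynomial A)
    (l : ℤ) : seval a l (Q * p) = 0 := by
  induction p using Polynomial.induction_on' generalizing l with
  | add p q hp hq => rw [mul_add, seval_add, hp, hq, add_zero]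
  | monomial e c => rw [seval_mul_monomial, hQ, mul_zero]

lemma seval_sum {ι : Type*} (a : ℤ → A) (l : ℤ) (F : Finset ι) (f : ι → Polynomial A) :
    seval a l (∑ s ∈ F, f s) = ∑ s ∈ F, seval a l (f s) := by
  induction F using Finset.cons_induction with
  | empty => simp [seval_zero]
  | cons s F hs ih => rw [sum_cons, sum_cons, seval_add, ih]

lemma seval_prod_expand (a : ℤ → A) (c : ℕ) (w : Fin m → A) (l : ℤ) :
    seval a l (∏ i, ((Polynomial.X : Polynomial A) ^ c - Polynomial.C (w i)))
      = ∑ d ∈ range (m + 1), (-1 : A) ^ d * esymm m w d * a (l + ((c * (m - d) : ℕ) : ℤ)) := by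
  have h1 : ∀ i : Fin m, (Polynomial.X : Polynomial A) ^ c - Polynomial.C (w i)
      = (X : Polynomial A) ^ c - Polynomial.C (w i) * 1 := fun i => by ring
  rw [prod_congr rfl fun i _ => h1 i, prod_sub_expand]
  have h2 : ∀ d, (-1 : Polynomial A) ^ d * esymm m (fun i => Polynomial.C (w i)) d *
      (((X : Polynomial A) ^ c) ^ (m - d) * 1 ^ d)
      = monomial (c * (m - d)) ((-1 : A) ^ d * esymm m w d) := by
    intro d
    have he : esymm m (fun i => Polynomial.C (w i)) d = Polynomial.C (esymm m w d) := by
      simp [esymm, map_sum, map_prod]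
    rw [he, one_pow, mul_one, ← map_one (Polynomial.C (R := A)), ← map_neg, ← map_pow, ← map_mul,
      ← pow_mul, C_mul_X_pow_eq_monomial]
  rw [sum_congr rfl fun d _ => h2 d, seval_sum]
  exact sum_congr rfl fun d _ => by rw [seval_monomial]

lemma dec (a : ℤ → A) (v : Fin m → Aˣ)
    (base : ∀ l : ℤ, ∑ d ∈ range (m + 1),
      (-1 : A) ^ d * esymm m (fun i => ((v i : Aˣ) : A)) d * a (l + ((m - d : ℕ) : ℤ)) = 0)
    (c : ℕ) (l : ℤ) :
    ∑ d ∈ range (m + 1),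
      (-1 : A) ^ d * esymm m (fun i => ((v i : Aˣ) : A) ^ c) d * a (l + ((c * (m - d) : ℕ) : ℤ))
      = 0 := by
  have hQ : ∀ l, seval a l (∏ i, ((Polynomial.X : Polynomial A) - Polynomial.C ((v i : Aˣ) : A)))
      = 0 := by
    intro l
    have := seval_prod_expand a 1 (fun i => ((v i : Aˣ) : A)) l
    simp only [pow_one, one_mul] at this
    rw [this]
    exact base l
  have hdvd : (∏ i, ((Polynomial.X : Polynomial A) - Polynomial.C ((v i : Aˣ) : A)))
      ∣ ∏ i, ((Polynomial.X : Polynomial A) ^ c - Polynomial.C (((v i : Aˣ) : A) ^ c)) := by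
    refine prod_dvd_prod_of_dvd _ _ fun i _ => ?_
    rw [map_pow]
    exact sub_dvd_pow_sub_pow _ _ c
  obtain ⟨R, hR⟩ := hdvd
  have h0 := seval_kill a _ hQ R l
  rw [← hR, seval_prod_expand] at h0
  exact h0

end Part3

section Part4
variable {A : Type*} [CommRing A] {m : ℕ} (t : Fin m → Aˣ)

lemma units_prod_mul_inv (u : Fin m → Aˣ) :
    (∏ i, ((u i : Aˣ) : A)) * ∏ i, (((u i)⁻¹ : Aˣ) : A) = 1 := by
  rw [← prod_mul_distrib]
  have : ∀ i : Fin m, ((u i : Aˣ) : A) * (((u i)⁻¹ : Aˣ) : A) = 1 := fun i => by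
    rw [← Units.val_mul, mul_inv_cancel, Units.val_one]
  simp [this]

lemma esymm_units_compl' (u : Fin m → Aˣ) {d : ℕ} (hd : d ≤ m) :
    esymm m (fun i => (((u i)⁻¹ : Aˣ) : A)) d
      = (∏ i, (((u i)⁻¹ : Aˣ) : A)) * esymm m (fun i => ((u i : Aˣ) : A)) (m - d) := by
  rw [esymm_units_compl u hd, ← mul_assoc, mul_comm (∏ i, (((u i)⁻¹ : Aˣ) : A)),
    units_prod_mul_inv, one_mul]

lemma esymm_units_compl'' (u : Fin m → Aˣ) {d : ℕ} (hd : d ≤ m) :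
    esymm m (fun i => ((u i : Aˣ) : A)) d
      = (∏ i, ((u i : Aˣ) : A)) * esymm m (fun i => (((u i)⁻¹ : Aˣ) : A)) (m - d) := by
  have := esymm_units_compl u (Nat.sub_le m d)
  rw [Nat.sub_sub_self hd] at this
  exact this

lemma neg_one_pow_sub {d : ℕ} (hd : d ≤ m) : (-1 : A) ^ (m - d) = (-1) ^ m * (-1) ^ d := by
  have h1 : (-1 : A) ^ (m - d) * ((-1 : A) ^ d * (-1 : A) ^ d) = (-1 : A) ^ (m - d) := by
    rw [← pow_add]
    have : (-1 : A) ^ (d + d) = ((-1 : A) ^ 2) ^ d := by rw [← pow_mul]; congr 1; omega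
    rw [this]; simp
  calc (-1 : A) ^ (m - d) = ((-1 : A) ^ (m - d) * (-1 : A) ^ d) * (-1 : A) ^ d := by
        rw [mul_assoc, h1]
    _ = (-1) ^ m * (-1) ^ d := by rw [← pow_add]; congr 2; omega

lemma sum_reflect (f : ℕ → A) :
    ∑ d ∈ range (m + 1), f d = ∑ d ∈ range (m + 1), f (m - d) := by
  rw [← sum_range_reflect f (m + 1)]
  exact sum_congr rfl fun d hd => by congr 1

lemma chi_of_nonneg {l : ℤ} (hl : 0 ≤ l) :
    chi m t l = hpow m (fun i => (((t i)⁻¹ : Aˣ) : A)) l.toNat := by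
  rw [chi, if_pos hl]; rfl

lemma chi_of_neg_small {l : ℤ} (h1 : l < 0) (h2 : -(m : ℤ) < l) : chi m t l = 0 := by
  rw [chi, if_neg (by omega), if_pos h2]

lemma chi_of_le (hm : m ≠ 0) {l : ℤ} (h : l ≤ -(m : ℤ)) :
    chi m t l = (-1 : A) ^ (m + 1) * (∏ i, ((t i : Aˣ) : A)) *
      hpow m (fun i => ((t i : Aˣ) : A)) (-l - m).toNat := by
  rw [chi, if_neg (by omega), if_neg (by omega)]; rfl

lemma chi_zero : chi m t 0 = 1 := by
  rw [chi_of_nonneg t le_rfl, Int.toNat_zero, hpow_zero]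

/-- the fundamental recurrence for `chi`, step 1, roots `t⁻¹`, decreasing argument. -/
lemma chi_rec (hm : m ≠ 0) (l : ℤ) :
    ∑ d ∈ range (m + 1),
      (-1 : A) ^ d * esymm m (fun i => (((t i)⁻¹ : Aˣ) : A)) d * chi m t (l - d) = 0 := by
  rcases lt_trichotomy l 0 with hl | hl | hl
  · -- l ≤ -1
    set N : ℕ := (-l).toNat with hN
    have hN1 : 1 ≤ N := by omega
    have step1 : ∑ d ∈ range (m + 1),
        (-1 : A) ^ d * esymm m (fun i => (((t i)⁻¹ : Aˣ) : A)) d * chi m t (l - d)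
        = (-1 : A) ^ (m + 1) * (∏ i, ((t i : Aˣ) : A)) * ∑ d ∈ range (m + 1),
          (-1 : A) ^ d * esymm m (fun i => (((t i)⁻¹ : Aˣ) : A)) d *
            (if l + m ≤ (d : ℤ) then hpow m (fun i => ((t i : Aˣ) : A)) ((d : ℤ) - l - m).toNat
             else 0) := by
      rw [mul_sum]
      refine sum_congr rfl fun d hd => ?_
      have hdm : d ≤ m := by simpa using Nat.lt_succ_iff.mp (mem_range.mp hd)
      by_cases hcase : l + m ≤ (d : ℤ)
      · rw [if_pos hcase, chi_of_le t hm (by omega)]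
        have : (-(l - d) - m).toNat = ((d : ℤ) - l - m).toNat := by omega
        rw [this]; ring
      · rw [if_neg hcase, chi_of_neg_small t (by omega) (by omega), mul_zero, mul_zero]
    rw [step1]
    rw [sum_reflect]
    have step2 : ∑ d ∈ range (m + 1),
        (-1 : A) ^ (m - d) * esymm m (fun i => (((t i)⁻¹ : Aˣ) : A)) (m - d) *
          (if l + m ≤ ((m - d : ℕ) : ℤ)
            then hpow m (fun i => ((t i : Aˣ) : A)) (((m - d : ℕ) : ℤ) - l - m).toNat else 0)
        = ((-1 : A) ^ m * ∏ i, (((t i)⁻¹ : Aˣ) : A)) * ∑ d ∈ range (m + 1),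
            (-1 : A) ^ d * esymm m (fun i => ((t i : Aˣ) : A)) d *
              (if d ≤ N then hpow m (fun i => ((t i : Aˣ) : A)) (N - d) else 0) := by
      rw [mul_sum]
      refine sum_congr rfl fun d hd => ?_
      have hdm : d ≤ m := by simpa using Nat.lt_succ_iff.mp (mem_range.mp hd)
      have he : esymm m (fun i => (((t i)⁻¹ : Aˣ) : A)) (m - d)
          = (∏ i, (((t i)⁻¹ : Aˣ) : A)) * esymm m (fun i => ((t i : Aˣ) : A)) d := by
        have h := esymm_units_compl' t (Nat.sub_le m d)
        rw [Nat.sub_sub_self hdm] at h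
        simpa using h
      rw [neg_one_pow_sub hdm, he]
      have hif : (if l + m ≤ ((m - d : ℕ) : ℤ)
            then hpow m (fun i => ((t i : Aˣ) : A)) (((m - d : ℕ) : ℤ) - l - m).toNat else 0)
          = (if d ≤ N then hpow m (fun i => ((t i : Aˣ) : A)) (N - d) else 0) := by
        by_cases hc : d ≤ N
        · rw [if_pos (by omega), if_pos hc]
          congr 1
          omega
        · rw [if_neg (by omega), if_neg hc]
      rw [hif]
      ring
    rw [step2, hrec _ hN1, mul_zero, mul_zero]
  · -- l = 0
    subst hl
    rw [sum_range_succ]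
    have h1 : ∑ d ∈ range m,
        (-1 : A) ^ d * esymm m (fun i => (((t i)⁻¹ : Aˣ) : A)) d * chi m t (0 - d)
        = 1 := by
      rw [Finset.sum_eq_single 0]
      · simp [esymm_zero, chi_zero]
      · intro d hd hd0
        have hdm : d < m := mem_range.mp hd
        rw [chi_of_neg_small t (by omega) (by omega), mul_zero]
      · intro h; exact absurd (mem_range.mpr (by omega)) h
    rw [h1]
    have h2 : chi m t (0 - (m : ℤ)) = (-1 : A) ^ (m + 1) * ∏ i, ((t i : Aˣ) : A) := by
      rw [chi_of_le t hm (by omega)]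
      have : (-(0 - (m : ℤ)) - m).toNat = 0 := by omega
      rw [this, hpow_zero, mul_one]
    rw [h2, esymm_self]
    have h3 : ((-1 : A) ^ m * ∏ i, (((t i)⁻¹ : Aˣ) : A)) *
        ((-1 : A) ^ (m + 1) * ∏ i, ((t i : Aˣ) : A)) = -1 := by
      have := units_prod_mul_inv t
      calc ((-1 : A) ^ m * ∏ i, (((t i)⁻¹ : Aˣ) : A)) *
          ((-1 : A) ^ (m + 1) * ∏ i, ((t i : Aˣ) : A))
          = ((-1 : A) ^ (m + (m + 1))) *
            ((∏ i, ((t i : Aˣ) : A)) * ∏ i, (((t i)⁻¹ : Aˣ) : A)) := by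
            rw [pow_add]; ring
        _ = -1 := by
            rw [units_prod_mul_inv]
            have : (-1 : A) ^ (m + (m + 1)) = -1 := by
              rw [show m + (m + 1) = 2 * m + 1 by omega, pow_succ, pow_mul]
              simp
            rw [this, mul_one]
    rw [h3]
    ring
  · -- l ≥ 1
    set N : ℕ := l.toNat with hN
    have hN1 : 1 ≤ N := by omega
    have step : ∑ d ∈ range (m + 1),
        (-1 : A) ^ d * esymm m (fun i => (((t i)⁻¹ : Aˣ) : A)) d * chi m t (l - d)
        = ∑ d ∈ range (m + 1), (-1 : A) ^ d * esymm m (fun i => (((t i)⁻¹ : Aˣ) : A)) d *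
            (if d ≤ N then hpow m (fun i => (((t i)⁻¹ : Aˣ) : A)) (N - d) else 0) := by
      refine sum_congr rfl fun d hd => ?_
      have hdm : d ≤ m := by simpa using Nat.lt_succ_iff.mp (mem_range.mp hd)
      by_cases hc : d ≤ N
      · rw [if_pos hc, chi_of_nonneg t (by omega)]
        congr 2
        omega
      · rw [if_neg hc, chi_of_neg_small t (by omega) (by omega), mul_zero]
    rw [step, hrec _ hN1]

end Part4

section Part5
variable {A : Type*} [CommRing A] {m : ℕ} (t : Fin m → Aˣ)

/-- base recurrence, roots `t⁻¹`, increasing argument, `dec`-shaped. -/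
lemma base1 (hm : m ≠ 0) (l : ℤ) :
    ∑ d ∈ range (m + 1),
      (-1 : A) ^ d * esymm m (fun i => (((t i)⁻¹ : Aˣ) : A)) d *
        chi m t (l + ((m - d : ℕ) : ℤ)) = 0 := by
  have h := chi_rec t hm (l + m)
  rw [← h]
  refine sum_congr rfl fun d hd => ?_
  have hdm : d ≤ m := by simpa using Nat.lt_succ_iff.mp (mem_range.mp hd)
  congr 1
  congr 1
  omega

/-- base recurrence, roots `t`, for `x ↦ chi (-x)`, `dec`-shaped. -/
lemma base2 (hm : m ≠ 0) (l : ℤ) :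
    ∑ d ∈ range (m + 1),
      (-1 : A) ^ d * esymm m (fun i => ((t i : Aˣ) : A)) d *
        chi m t (-(l + ((m - d : ℕ) : ℤ))) = 0 := by
  rw [sum_reflect]
  have step : ∑ d ∈ range (m + 1),
      (-1 : A) ^ (m - d) * esymm m (fun i => ((t i : Aˣ) : A)) (m - d) *
        chi m t (-(l + ((m - (m - d) : ℕ) : ℤ)))
      = ((-1 : A) ^ m * ∏ i, ((t i : Aˣ) : A)) * ∑ d ∈ range (m + 1),
          (-1 : A) ^ d * esymm m (fun i => (((t i)⁻¹ : Aˣ) : A)) d * chi m t ((-l) - d) := by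
    rw [mul_sum]
    refine sum_congr rfl fun d hd => ?_
    have hdm : d ≤ m := by simpa using Nat.lt_succ_iff.mp (mem_range.mp hd)
    rw [neg_one_pow_sub hdm, esymm_units_compl t hdm]
    have harg : chi m t (-(l + ((m - (m - d) : ℕ) : ℤ))) = chi m t ((-l) - d) := by
      congr 1
      have h1 : m - (m - d) = d := by omega
      rw [h1]
      ring
    rw [harg]
    ring
  rw [step, chi_rec t hm (-l), mul_zero]

/-- the key vanishing sum: step-`k` recurrence with coefficients `e_d(t^{-k})`. -/
lemma keyfinal (hm : m ≠ 0) (k L : ℤ) :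
    ∑ d ∈ range (m + 1),
      (-1 : A) ^ d * esymm m (fun i => ((t i ^ (-k) : Aˣ) : A)) d * chi m t (L - k * d) = 0 := by
  rcases le_or_gt 0 k with hk | hk
  · -- k ≥ 0
    set c : ℕ := k.toNat with hcdef
    have hc : ((c : ℕ) : ℤ) = k := Int.toNat_of_nonneg hk
    have hT : ∀ i, t i ^ (-k) = (t i ^ c)⁻¹ := fun i => by
      rw [← hc, zpow_neg, zpow_natCast]
    have inst2 := dec (fun x => chi m t (-x)) t (base2 t hm) c (-L)
    have step1 : ∑ d ∈ range (m + 1),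
        (-1 : A) ^ d * esymm m (fun i => ((t i ^ (-k) : Aˣ) : A)) d * chi m t (L - k * d)
        = (∏ i, (((t i ^ c)⁻¹ : Aˣ) : A)) * ∑ d ∈ range (m + 1),
            (-1 : A) ^ d * esymm m (fun i => ((t i ^ c : Aˣ) : A)) (m - d) *
              chi m t (L - k * d) := by
      rw [mul_sum]
      refine sum_congr rfl fun d hd => ?_
      have hdm : d ≤ m := by simpa using Nat.lt_succ_iff.mp (mem_range.mp hd)
      simp only [hT]
      rw [esymm_units_compl' (fun i => t i ^ c) hdm]
      ring
    rw [step1, sum_reflect]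
    have step2 : ∑ d ∈ range (m + 1),
        (-1 : A) ^ (m - d) * esymm m (fun i => ((t i ^ c : Aˣ) : A)) (m - (m - d)) *
          chi m t (L - k * ((m - d : ℕ) : ℤ))
        = (-1 : A) ^ m * ∑ d ∈ range (m + 1),
            (-1 : A) ^ d * esymm m (fun i => ((t i : Aˣ) : A) ^ c) d *
              chi m t (-(-L + ((c * (m - d) : ℕ) : ℤ))) := by
      rw [mul_sum]
      refine sum_congr rfl fun d hd => ?_
      have hdm : d ≤ m := by simpa using Nat.lt_succ_iff.mp (mem_range.mp hd)
      have h1 : m - (m - d) = d := by omega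
      rw [h1, neg_one_pow_sub hdm]
      have h2 : esymm m (fun i => ((t i ^ c : Aˣ) : A)) d
          = esymm m (fun i => ((t i : Aˣ) : A) ^ c) d := by
        refine congrArg (fun f => esymm m f d) (funext fun i => ?_)
        exact Units.val_pow_eq_pow_val _ _
      rw [h2]
      have h3 : chi m t (L - k * ((m - d : ℕ) : ℤ)) = chi m t (-(-L + ((c * (m - d) : ℕ) : ℤ))) := by
        congr 1
        rw [← hc]
        push_cast [Nat.cast_sub hdm]
        ring
      rw [h3]
      ring
    rw [step2, inst2, mul_zero, mul_zero]
  · -- k < 0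
    set c : ℕ := (-k).toNat with hcdef
    have hc : ((c : ℕ) : ℤ) = -k := Int.toNat_of_nonneg (by omega)
    have hT : ∀ i, t i ^ (-k) = t i ^ c := fun i => by
      rw [← hc, zpow_natCast]
    have inst1 := dec (chi m t) (fun i => (t i)⁻¹) (base1 t hm) c L
    have step1 : ∑ d ∈ range (m + 1),
        (-1 : A) ^ d * esymm m (fun i => ((t i ^ (-k) : Aˣ) : A)) d * chi m t (L - k * d)
        = (∏ i, ((t i ^ c : Aˣ) : A)) * ∑ d ∈ range (m + 1),
            (-1 : A) ^ d * esymm m (fun i => (((t i ^ c)⁻¹ : Aˣ) : A)) (m - d) *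
              chi m t (L - k * d) := by
      rw [mul_sum]
      refine sum_congr rfl fun d hd => ?_
      have hdm : d ≤ m := by simpa using Nat.lt_succ_iff.mp (mem_range.mp hd)
      simp only [hT]
      rw [esymm_units_compl'' (fun i => t i ^ c) hdm]
      ring
    rw [step1, sum_reflect]
    have step2 : ∑ d ∈ range (m + 1),
        (-1 : A) ^ (m - d) * esymm m (fun i => (((t i ^ c)⁻¹ : Aˣ) : A)) (m - (m - d)) *
          chi m t (L - k * ((m - d : ℕ) : ℤ))
        = (-1 : A) ^ m * ∑ d ∈ range (m + 1),
            (-1 : A) ^ d * esymm m (fun i => (((t i)⁻¹ : Aˣ) : A) ^ c) d *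
              chi m t (L + ((c * (m - d) : ℕ) : ℤ)) := by
      rw [mul_sum]
      refine sum_congr rfl fun d hd => ?_
      have hdm : d ≤ m := by simpa using Nat.lt_succ_iff.mp (mem_range.mp hd)
      have h1 : m - (m - d) = d := by omega
      rw [h1, neg_one_pow_sub hdm]
      have h2 : esymm m (fun i => (((t i ^ c)⁻¹ : Aˣ) : A)) d
          = esymm m (fun i => (((t i)⁻¹ : Aˣ) : A) ^ c) d := by
        refine congrArg (fun f => esymm m f d) (funext fun i => ?_)
        rw [← inv_pow]
        exact Units.val_pow_eq_pow_val _ _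
      rw [h2]
      have h3 : chi m t (L - k * ((m - d : ℕ) : ℤ)) = chi m t (L + ((c * (m - d) : ℕ) : ℤ)) := by
        congr 1
        push_cast [Nat.cast_sub hdm]
        rw [hc]
        ring
      rw [h3]
      ring
    rw [step2, inst1, mul_zero, mul_zero]

end Part5

/-- Proposition 4.13(2) of the paper, negative part, as a power series
identity in `S = t⁻¹`.  For `n ≥ 0`, `k ∈ ℤ` and `0 ≤ j ≤ max 0 (|k| - 1)`, one has
`(Π_{i=1}^{n+1} (1 - t_i^{-k} S)) · (Σ_{m≥1} χ_{n,km+j} S^m)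
  = (-1)^n (t₁⋯t_{n+1})^{-k} Σ_{l=0}^{n} b_l^{(j)} S^{n+1-l}`. -/
theorem generating_series_negative_part {A : Type*} [CommRing A]
    (n : ℕ) (k j : ℤ) (hj0 : 0 ≤ j) (hj1 : j ≤ max 0 (|k| - 1))
    (t : Fin (n + 1) → Aˣ) :
    (∏ i, (1 - PowerSeries.C ((t i ^ (-k) : Aˣ) : A) * PowerSeries.X)) *
        PowerSeries.mk (fun m => if m = 0 then 0 else chi (n + 1) t (k * (m : ℤ) + j)) =
      PowerSeries.C ((-1 : A) ^ n * (((∏ i, t i) ^ (-k) : Aˣ) : A)) *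
        ∑ l ∈ Finset.range (n + 1),
          PowerSeries.C (Bcoeff (n + 1) t k j l) * PowerSeries.X ^ (n + 1 - l) := by
  ext N
  set G : PowerSeries A :=
    PowerSeries.mk (fun M => if M = 0 then 0 else chi (n + 1) t (k * (M : ℤ) + j)) with hGdef
  rw [coeff_prod_one_sub_mul (fun i => ((t i ^ (-k) : Aˣ) : A)) G N]
  have hR : PowerSeries.coeff N (PowerSeries.C ((-1 : A) ^ n * (((∏ i, t i) ^ (-k) : Aˣ) : A)) *
      ∑ l ∈ Finset.range (n + 1),
        PowerSeries.C (Bcoeff (n + 1) t k j l) * PowerSeries.X ^ (n + 1 - l))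
      = ∑ l ∈ Finset.range (n+1), ((-1 : A) ^ n * (((∏ i, t i) ^ (-k) : Aˣ) : A)) *
          (Bcoeff (n+1) t k j l * (if N = (n+1) - l then 1 else 0)) := by
    rw [PowerSeries.coeff_C_mul, map_sum, mul_sum]
    refine sum_congr rfl fun l hl => ?_
    rw [PowerSeries.coeff_mul_X_pow', PowerSeries.coeff_C]
    congr 1
    by_cases hc : N = (n+1) - l
    · have hlm : l < (n+1) := mem_range.mp hl
      rw [if_pos hc, if_pos (by omega), if_pos (by omega), mul_one]
    · rw [if_neg hc, mul_zero]
      split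
      · split
        · omega
        · rfl
      · rfl
  rw [hR]
  have hG : ∀ M : ℕ, PowerSeries.coeff M G
      = if M = 0 then 0 else chi (n + 1) t (k * (M : ℤ) + j) := fun M => PowerSeries.coeff_mk _ _
  rcases lt_trichotomy N 0 with hN | hN | hN
  · omega
  · -- N = 0
    subst hN
    rw [Finset.sum_eq_zero, Finset.sum_eq_zero]
    · intro l hl
      have : l < (n+1) := mem_range.mp hl
      rw [if_neg (by omega), mul_zero, mul_zero]
    · intro d hd
      by_cases hc : d ≤ 0
      · have hd0 : d = 0 := by omega
        subst hd0
        rw [if_pos le_rfl, hG, if_pos rfl, mul_zero]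
      · rw [if_neg hc, mul_zero]
  rcases le_or_gt N (n+1) with hNm | hNm
  · -- 1 ≤ N ≤ m : the bookkeeping case
    have hRsingle : ∑ l ∈ range (n + 1), (-1 : A) ^ n * (((∏ i, t i) ^ (-k) : Aˣ) : A) *
        (Bcoeff (n + 1) t k j l * (if N = n + 1 - l then 1 else 0))
        = (-1 : A) ^ n * (((∏ i, t i) ^ (-k) : Aˣ) : A) * Bcoeff (n + 1) t k j (n + 1 - N) := by
      rw [Finset.sum_eq_single (n + 1 - N)]
      · rw [if_pos (by omega), mul_one]
      · intro l hl hne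
        have : l < n + 1 := mem_range.mp hl
        rw [if_neg (by omega), mul_zero, mul_zero]
      · intro h
        exact absurd (mem_range.mpr (by omega)) h
    rw [hRsingle]
    have hLsum : ∑ d ∈ range (n + 1 + 1),
        (-1 : A) ^ d * esymm (n + 1) (fun i => ((t i ^ (-k) : Aˣ) : A)) d *
          (if d ≤ N then PowerSeries.coeff (N - d) G else 0)
        = ∑ d ∈ range N, (-1 : A) ^ d * esymm (n + 1) (fun i => ((t i ^ (-k) : Aˣ) : A)) d *
            chi (n + 1) t (k * ((N : ℤ) - d) + j) := by
      rw [← Finset.sum_subset (Finset.range_subset_range.mpr (show N ≤ n + 1 + 1 by omega))]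
      · refine sum_congr rfl fun d hd => ?_
        have hdN : d < N := mem_range.mp hd
        rw [if_pos (by omega), hG, if_neg (by omega)]
        congr 2
        push_cast [Nat.cast_sub (show d ≤ N by omega)]
        ring
      · intro d hd hdn
        have hdN : N ≤ d := by
          by_contra hcon
          exact hdn (mem_range.mpr (by omega))
        by_cases hc : d ≤ N
        · rw [if_pos hc, hG, show N - d = 0 by omega, if_pos rfl, mul_zero]
        · rw [if_neg hc, mul_zero]
    rw [hLsum, Bcoeff, show n + 1 - (n + 1 - N) = N by omega, mul_sum]
    refine sum_nbij' (fun d => N - d) (fun i => N - i) ?_ ?_ ?_ ?_ ?_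
    · intro d hd
      have : d < N := mem_range.mp hd
      simp only [Finset.mem_Icc]
      omega
    · intro i hi
      have := Finset.mem_Icc.mp hi
      simp only [Finset.mem_range]
      omega
    · intro d hd
      have : d < N := mem_range.mp hd
      show N - (N - d) = d
      omega
    · intro i hi
      have := Finset.mem_Icc.mp hi
      show N - (N - i) = i
      omega
    · intro d hd
      have hdN : d < N := mem_range.mp hd
      have hdm : d ≤ n + 1 := by omega
      -- rewrite the RHS term
      have hexp : N - d + (n + 1 - N) = n + 1 - d := by omega
      have hexp1 : N - d + (n + 1 - N) + 1 = (n + 1 - d) + 1 := by omega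
      have hesymm : esymm (n + 1) (tk t k) (n + 1 - d)
          = (∏ i, ((t i ^ k : Aˣ) : A)) *
              esymm (n + 1) (fun i => ((t i ^ (-k) : Aˣ) : A)) d := by
        have h := esymm_units_compl (m := n + 1) (fun i => t i ^ k) hdm
        have hfun : (fun i => ((((fun i => t i ^ k) i)⁻¹ : Aˣ) : A))
            = fun i => ((t i ^ (-k) : Aˣ) : A) := by
          funext i
          rw [← zpow_neg]
        rw [hfun] at h
        exact h
      have hsign : (-1 : A) ^ ((n + 1 - d) + 1) = ((-1) ^ (n + 1) * (-1) ^ d) * (-1) := by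
        rw [pow_succ, neg_one_pow_sub (m := n + 1) hdm]
      have hchi : chi (n + 1) t (((N - d : ℕ) : ℤ) * k + j)
          = chi (n + 1) t (k * ((N : ℤ) - d) + j) := by
        congr 1
        push_cast [Nat.cast_sub (show d ≤ N by omega)]
        ring
      rw [hexp1, hexp, hesymm, hsign, hchi]
      have hprod : (((∏ i, t i) ^ (-k) : Aˣ) : A) * ∏ i, ((t i ^ k : Aˣ) : A) = 1 := by
        have h1 : ∏ i, ((t i ^ k : Aˣ) : A) = (((∏ i, t i ^ k : Aˣ)) : A) :=
          (map_prod (Units.coeHom A) _ _).symm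
        rw [h1, ← Units.val_mul]
        have h2 : (∏ i, t i) ^ (-k) * ∏ i, t i ^ k = 1 := by
          rw [Finset.prod_zpow, ← zpow_add, neg_add_cancel, zpow_zero]
        rw [h2, Units.val_one]
      have hsign2 : (-1 : A) ^ n * ((-1 : A) ^ (n + 1) * (-1 : A) ^ d * (-1)) =
          (-1 : A) ^ d * (((-1 : A) ^ n * (-1) ^ (n + 1)) * (-1)) := by ring
      have hsign3 : ((-1 : A) ^ n * (-1 : A) ^ (n + 1)) * (-1) = 1 := by
        rw [← pow_add, ← pow_succ, show n + (n + 1) + 1 = 2 * (n + 1) by omega, pow_mul]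
        norm_num
      calc (-1 : A) ^ d * esymm (n + 1) (fun i => ((t i ^ (-k) : Aˣ) : A)) d *
            chi (n + 1) t (k * ((N : ℤ) - d) + j)
          = ((-1 : A) ^ d * (((-1 : A) ^ n * (-1) ^ (n + 1)) * (-1))) *
              ((((∏ i, t i) ^ (-k) : Aˣ) : A) * ∏ i, ((t i ^ k : Aˣ) : A)) *
              (chi (n + 1) t (k * ((N : ℤ) - d) + j) *
                esymm (n + 1) (fun i => ((t i ^ (-k) : Aˣ) : A)) d) := by
            rw [hsign3, hprod]; ring
        _ = _ := by ring
  · -- N > m : keyfinal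
    trans (0 : A)
    · rw [← keyfinal t (Nat.succ_ne_zero n) k (k * N + j)]
      refine sum_congr rfl fun d hd => ?_
      have hdm : d ≤ n + 1 := by simpa using Nat.lt_succ_iff.mp (mem_range.mp hd)
      rw [if_pos (by omega), hG, if_neg (by omega)]
      congr 1
      congr 1
      push_cast [Nat.cast_sub (show d ≤ N by omega)]
      ring
    · symm
      refine Finset.sum_eq_zero fun l hl => ?_
      have : l < n + 1 := mem_range.mp hl
      rw [if_neg (by omega), mul_zero, mul_zero]
end
end

section
/- Lemma 4.5(2) of the paper. For every integer n ≥ 1, every l ∈ ℤ, and every integer j ≥ 1, one has χ_{n,l} = Σ_{i=0}^{j−1} χ_{n−1,l−i} · t_{n+1}^{−i} + χ_{n,l−j} · t_{n+1}^{−j} in R_{n+1}. -/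
open Finset

noncomputable section

lemma core_split {A : Type*} [CommRing A] (n d : ℕ) (f : Fin (n + 1) → A) :
    ∑ r ∈ Finset.Nat.antidiagonalTuple (n + 1) (d + 1), ∏ i, f i ^ r i
    = (∑ r ∈ Finset.Nat.antidiagonalTuple n (d + 1), ∏ i, f i.castSucc ^ r i)
      + f (Fin.last n) * ∑ r ∈ Finset.Nat.antidiagonalTuple (n + 1) d, ∏ i, f i ^ r i := by
  classical
  rw [← Finset.sum_filter_add_sum_filter_not (Finset.Nat.antidiagonalTuple (n + 1) (d + 1))
    (fun r => r (Fin.last n) = 0)]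
  congr 1
  · refine Finset.sum_nbij' (i := fun r => r ∘ Fin.castSucc) (j := fun r => Fin.snoc r 0)
      ?_ ?_ ?_ ?_ ?_
    · intro r hr
      simp only [Finset.mem_filter, Finset.Nat.mem_antidiagonalTuple] at hr
      rw [Finset.Nat.mem_antidiagonalTuple]
      obtain ⟨h1, h2⟩ := hr
      rw [Fin.sum_univ_castSucc, h2] at h1
      simpa using h1
    · intro r hr
      rw [Finset.Nat.mem_antidiagonalTuple] at hr
      simp only [Finset.mem_filter, Finset.Nat.mem_antidiagonalTuple]
      constructor
      · rw [Fin.sum_univ_castSucc]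
        simp [hr]
      · simp
    · intro r hr
      simp only [Finset.mem_filter] at hr
      funext i
      refine Fin.lastCases ?_ ?_ i
      · simp [hr.2]
      · intro i; simp
    · intro r hr
      funext i
      simp
    · intro r hr
      simp only [Finset.mem_filter] at hr
      rw [Fin.prod_univ_castSucc]
      simp [hr.2]
  · rw [Finset.mul_sum]
    refine Finset.sum_nbij'
      (i := fun r => Function.update r (Fin.last n) (r (Fin.last n) - 1))
      (j := fun r => Function.update r (Fin.last n) (r (Fin.last n) + 1)) ?_ ?_ ?_ ?_ ?_
    · intro r hr
      simp only [Finset.mem_filter, Finset.Nat.mem_antidiagonalTuple] at hr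
      rw [Finset.Nat.mem_antidiagonalTuple]
      rw [Fin.sum_univ_castSucc] at hr ⊢
      have h1 : ∀ i : Fin n, Function.update r (Fin.last n) (r (Fin.last n) - 1) i.castSucc
          = r i.castSucc := fun i =>
        Function.update_of_ne (Fin.castSucc_lt_last i).ne (r (Fin.last n) - 1) r
      simp only [h1, Function.update_self]
      omega
    · intro r hr
      rw [Finset.Nat.mem_antidiagonalTuple] at hr
      simp only [Finset.mem_filter, Finset.Nat.mem_antidiagonalTuple]
      rw [Fin.sum_univ_castSucc] at hr ⊢
      have h1 : ∀ i : Fin n, Function.update r (Fin.last n) (r (Fin.last n) + 1) i.castSucc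
          = r i.castSucc := fun i =>
        Function.update_of_ne (Fin.castSucc_lt_last i).ne (r (Fin.last n) + 1) r
      simp only [h1, Function.update_self]
      omega
    · intro r hr
      simp only [Finset.mem_filter] at hr
      simp only [Function.update_idem, Function.update_self]
      rw [Nat.sub_add_cancel (Nat.one_le_iff_ne_zero.mpr hr.2), Function.update_eq_self]
    · intro r hr
      simp only [Function.update_idem, Function.update_self, Nat.add_sub_cancel,
        Function.update_eq_self]
    · intro r hr
      simp only [Finset.mem_filter, Finset.Nat.mem_antidiagonalTuple] at hr
      rw [Fin.prod_univ_castSucc, Fin.prod_univ_castSucc]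
      have h1 : ∀ i : Fin n, Function.update r (Fin.last n) (r (Fin.last n) - 1) i.castSucc
          = r i.castSucc := fun i =>
        Function.update_of_ne (Fin.castSucc_lt_last i).ne (r (Fin.last n) - 1) r
      simp only [h1, Function.update_self]
      have h2 : f (Fin.last n) ^ r (Fin.last n)
          = f (Fin.last n) * f (Fin.last n) ^ (r (Fin.last n) - 1) := by
        conv_lhs => rw [show r (Fin.last n) = (r (Fin.last n) - 1) + 1 by omega]
        rw [pow_succ]
        ring
      rw [h2]; ring

lemma chi_step {A : Type*} [CommRing A] (n : ℕ) (hn : 1 ≤ n) (l : ℤ) (t : Fin (n + 1) → Aˣ) :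
    chi (n + 1) t l = chi n (t ∘ Fin.castSucc) l
      + chi (n + 1) t (l - 1) * (((t (Fin.last n))⁻¹ : Aˣ) : A) := by
  have hT : (∏ i, ((t i : Aˣ) : A))
      = (∏ i : Fin n, ((t i.castSucc : Aˣ) : A)) * ((t (Fin.last n) : Aˣ) : A) :=
    Fin.prod_univ_castSucc (fun i => ((t i : Aˣ) : A))
  have hu : ((t (Fin.last n) : Aˣ) : A) * (((t (Fin.last n))⁻¹ : Aˣ) : A) = 1 :=
    Units.mul_inv _
  by_cases h1 : 1 ≤ l
  · -- positive case
    have e1 : chi (n + 1) t l = ∑ r ∈ Finset.Nat.antidiagonalTuple (n + 1) ((l-1).toNat + 1),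
        ∏ i, (((t i)⁻¹ : Aˣ) : A) ^ r i := by
      rw [chi, if_pos (by omega), show l.toNat = (l-1).toNat + 1 by omega]
    have e2 : chi n (t ∘ Fin.castSucc) l = ∑ r ∈ Finset.Nat.antidiagonalTuple n ((l-1).toNat + 1),
        ∏ i, (((t i.castSucc)⁻¹ : Aˣ) : A) ^ r i := by
      rw [chi, if_pos (by omega), show l.toNat = (l-1).toNat + 1 by omega]
      simp [Function.comp]
    have e3 : chi (n + 1) t (l - 1) = ∑ r ∈ Finset.Nat.antidiagonalTuple (n + 1) ((l-1).toNat),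
        ∏ i, (((t i)⁻¹ : Aˣ) : A) ^ r i := by
      rw [chi, if_pos (by omega)]
    rw [e1, e2, e3, core_split n ((l-1).toNat) (fun i => (((t i)⁻¹ : Aˣ) : A))]
    ring
  · by_cases h0 : l = 0
    · subst h0
      have e1 : chi (n + 1) t 0 = 1 := by
        rw [chi, if_pos le_rfl]
        simp [Finset.Nat.antidiagonalTuple_zero_right]
      have e2 : chi n (t ∘ Fin.castSucc) 0 = 1 := by
        rw [chi, if_pos le_rfl]
        simp [Finset.Nat.antidiagonalTuple_zero_right]
      have e3 : chi (n + 1) t (0 - 1) = 0 := by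
        rw [chi, if_neg (by omega), if_pos (by omega)]
      rw [e1, e2, e3]
      ring
    · by_cases h2 : -(n : ℤ) < l
      · -- -n < l < 0 : everything vanishes
        have e1 : chi (n + 1) t l = 0 := by
          rw [chi, if_neg (by omega), if_pos (by omega)]
        have e2 : chi n (t ∘ Fin.castSucc) l = 0 := by
          rw [chi, if_neg (by omega), if_pos (by omega)]
        have e3 : chi (n + 1) t (l - 1) = 0 := by
          rw [chi, if_neg (by omega), if_pos (by omega)]
        rw [e1, e2, e3]
        ring
      · by_cases h3 : l = -(n : ℤ)
        · have e1 : chi (n + 1) t l = 0 := by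
            rw [chi, if_neg (by omega), if_pos (by omega)]
          have e2 : chi n (t ∘ Fin.castSucc) l
              = (-1 : A) ^ (n + 1) * ∏ i : Fin n, ((t i.castSucc : Aˣ) : A) := by
            rw [chi, if_neg (by omega), if_neg (by omega)]
            have hz : (-l - (n : ℤ)).toNat = 0 := by omega
            rw [hz]
            simp [Finset.Nat.antidiagonalTuple_zero_right, Function.comp]
          have e3 : chi (n + 1) t (l - 1)
              = (-1 : A) ^ (n + 1 + 1) * ∏ i, ((t i : Aˣ) : A) := by
            rw [chi, if_neg (by omega), if_neg (by omega)]
            have hz : (-(l - 1) - ((n : ℤ) + 1)).toNat = 0 := by omega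
            rw [show (-(l-1) - ((n+1 : ℕ) : ℤ)).toNat = 0 by push_cast; omega]
            simp [Finset.Nat.antidiagonalTuple_zero_right]
          rw [e1, e2, e3, hT]
          linear_combination (-(-1 : A) ^ (n + 1 + 1)
            * ∏ i : Fin n, ((t i.castSucc : Aˣ) : A)) * hu
        · -- l ≤ -(n+1)
          set d : ℕ := (-l - ((n + 1 : ℕ) : ℤ)).toNat with hd
          have e1 : chi (n + 1) t l = (-1 : A) ^ (n + 1 + 1) * (∏ i, ((t i : Aˣ) : A)) *
              ∑ r ∈ Finset.Nat.antidiagonalTuple (n + 1) d, ∏ i, ((t i : Aˣ) : A) ^ r i := by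
            rw [chi, if_neg (by omega), if_neg (by push_cast; omega)]
          have e2 : chi n (t ∘ Fin.castSucc) l
              = (-1 : A) ^ (n + 1) * (∏ i : Fin n, ((t i.castSucc : Aˣ) : A)) *
              ∑ r ∈ Finset.Nat.antidiagonalTuple n (d + 1),
                ∏ i, ((t i.castSucc : Aˣ) : A) ^ r i := by
            rw [chi, if_neg (by omega), if_neg (by omega)]
            rw [show (-l - (n : ℤ)).toNat = d + 1 by omega]
            simp [Function.comp]
          have e3 : chi (n + 1) t (l - 1)
              = (-1 : A) ^ (n + 1 + 1) * (∏ i, ((t i : Aˣ) : A)) *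
              ∑ r ∈ Finset.Nat.antidiagonalTuple (n + 1) (d + 1),
                ∏ i, ((t i : Aˣ) : A) ^ r i := by
            rw [chi, if_neg (by omega), if_neg (by push_cast; omega)]
            rw [show (-(l - 1) - ((n + 1 : ℕ) : ℤ)).toNat = d + 1 by omega]
          rw [e1, e2, e3, core_split n d (fun i => ((t i : Aˣ) : A)), hT]
          set P := ∏ i : Fin n, ((t i.castSucc : Aˣ) : A)
          set tl := ((t (Fin.last n) : Aˣ) : A)
          set u := (((t (Fin.last n))⁻¹ : Aˣ) : A)
          set S := ∑ r ∈ Finset.Nat.antidiagonalTuple (n + 1) d, ∏ i, ((t i : Aˣ) : A) ^ r i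
          set Sn := ∑ r ∈ Finset.Nat.antidiagonalTuple n (d + 1),
            ∏ i, ((t i.castSucc : Aˣ) : A) ^ r i
          linear_combination (-(-1 : A) ^ (n + 1 + 1) * P * (Sn + tl * S)) * hu

/-- Lemma 4.5(2) of the paper.  For `n ≥ 1`, `l ∈ ℤ` and `j ≥ 1`,
`χ_{n,l} = Σ_{i=0}^{j-1} χ_{n-1,l-i} · t_{n+1}^{-i} + χ_{n,l-j} · t_{n+1}^{-j}`. -/
theorem chi_multi_step {A : Type*} [CommRing A]
    (n : ℕ) (hn : 1 ≤ n) (l : ℤ) (j : ℕ) (hj : 1 ≤ j) (t : Fin (n + 1) → Aˣ) :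
    chi (n + 1) t l =
      (∑ i ∈ Finset.range j,
          chi n (t ∘ Fin.castSucc) (l - i) * ((((t (Fin.last n))⁻¹ : Aˣ) : A)) ^ i) +
        chi (n + 1) t (l - j) * ((((t (Fin.last n))⁻¹ : Aˣ) : A)) ^ j := by
  induction j with
  | zero => omega
  | succ j ih =>
    rcases Nat.eq_zero_or_pos j with rfl | hj'
    · simpa using chi_step n hn l t
    · rw [ih hj', Finset.sum_range_succ, chi_step n hn (l - j) t]
      push_cast
      rw [show l - ((j : ℤ) + 1) = l - (j : ℤ) - 1 by ring]
      ring
end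
end

section
/- Lemma 4.5(4) of the paper. For every integer n ≥ 1 and every integer l ≤ −2, one has χ_{n,l} = − Σ_{i=1}^{−l−1} χ_{n−1,l+i} · t_{n+1}^{i} in R_{n+1}. -/
open Finset

noncomputable section

lemma sum_antidiagonalTuple_snoc {A : Type*} [AddCommMonoid A] (k N : ℕ)
    (g : (Fin (k+1) → ℕ) → A) :
    ∑ r ∈ Finset.Nat.antidiagonalTuple (k+1) N, g r =
      ∑ p ∈ Finset.HasAntidiagonal.antidiagonal N, ∑ q ∈ Finset.Nat.antidiagonalTuple k p.1,
        g (Fin.snoc q p.2) := by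
  rw [Finset.sum_sigma' (Finset.HasAntidiagonal.antidiagonal N) (fun p => Finset.Nat.antidiagonalTuple k p.1) (fun p q => g (Fin.snoc q p.2))]
  refine Finset.sum_nbij' (fun r => ⟨(∑ j, r (Fin.castSucc j), r (Fin.last k)), r ∘ Fin.castSucc⟩)
    (fun x => Fin.snoc x.2 x.1.2) ?_ ?_ ?_ ?_ ?_
  · intro r hr
    rw [Finset.Nat.mem_antidiagonalTuple] at hr
    simp only [Finset.mem_sigma, Finset.HasAntidiagonal.mem_antidiagonal, Finset.Nat.mem_antidiagonalTuple]
    constructor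
    · rw [← hr, Fin.sum_univ_castSucc]
    · simp
  · intro x hx
    rw [Finset.mem_sigma, Finset.HasAntidiagonal.mem_antidiagonal] at hx
    rw [Finset.Nat.mem_antidiagonalTuple] at hx ⊢
    rw [Fin.sum_univ_castSucc]
    simp [hx.2, hx.1]
  · intro r hr
    ext i
    refine Fin.lastCases ?_ ?_ i <;> simp
  · intro x hx
    rw [Finset.mem_sigma, Finset.Nat.mem_antidiagonalTuple] at hx
    ext
    · simp [hx.2]
    · simp
    · simp
  · intro r hr
    congr 1
    ext i
    refine Fin.lastCases ?_ ?_ i <;> simp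


/-- Lemma 4.5(4) of the paper.  For `n ≥ 1` and `l ≤ -2`,
`χ_{n,l} = - Σ_{i=1}^{-l-1} χ_{n-1,l+i} · t_{n+1}^{i}`. -/
theorem chi_neg_expansion {A : Type*} [CommRing A]
    (n : ℕ) (hn : 1 ≤ n) (l : ℤ) (hl : l ≤ -2) (t : Fin (n + 1) → Aˣ) :
    chi (n + 1) t l =
      - ∑ i ∈ Finset.Icc 1 (-l - 1).toNat,
          chi n (t ∘ Fin.castSucc) (l + i) * (((t (Fin.last n) : Aˣ) : A)) ^ i := by
  have h2 : ¬ (0 ≤ l) := by omega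
  have hl1 : ((-l - 1).toNat : ℤ) = -l - 1 := Int.toNat_of_nonneg (by omega)
  by_cases hln : l ≤ -((n : ℤ) + 1)
  · -- hard case
    set M : ℕ := (-l - (n + 1 : ℕ)).toNat with hMdef
    have hM : (M : ℤ) = -l - (n+1 : ℕ) := Int.toNat_of_nonneg (by push_cast; omega)
    have hlhs : chi (n+1) t l = (-1:A)^(n+1+1) * (∏ i, ((t i : Aˣ) : A)) *
        ∑ r ∈ Finset.Nat.antidiagonalTuple (n+1) M, ∏ i, ((t i : Aˣ) : A) ^ r i := by
      rw [chi, if_neg h2, if_neg (by push_cast at hln ⊢; omega)]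
    rw [hlhs]
    have hsub : Finset.Icc 1 (M+1) ⊆ Finset.Icc 1 (-l - 1).toNat := by
      intro i hi
      rw [Finset.mem_Icc] at hi ⊢
      omega
    rw [← Finset.sum_subset hsub (fun i hi hni => by
      rw [Finset.mem_Icc] at hi
      rw [Finset.mem_Icc] at hni
      have h1 : ¬ (0 ≤ l + i) := by omega
      have h3 : -(n : ℤ) < l + i := by omega
      rw [chi, if_neg h1, if_pos h3, zero_mul])]
    rw [sum_antidiagonalTuple_snoc n M (fun r => ∏ i, ((t i : Aˣ) : A) ^ r i)]
    rw [Finset.Nat.sum_antidiagonal_eq_sum_range_succ_mk]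
    rw [← Finset.Ico_add_one_right_eq_Icc, Finset.sum_Ico_eq_sum_range]
    simp only [Nat.succ_sub_one, Nat.add_sub_cancel]
    rw [← Finset.sum_range_reflect
      (fun j => chi n (t ∘ Fin.castSucc) (l + (1 + j : ℕ)) *
        ((t (Fin.last n) : Aˣ) : A) ^ (1 + j)) (M+1)]
    rw [← Finset.sum_neg_distrib, Finset.mul_sum]
    apply Finset.sum_congr rfl
    intro k hk
    rw [Finset.mem_range] at hk
    simp only [Nat.add_sub_cancel]
    have hc : ((1 + (M - k) : ℕ) : ℤ) = 1 + (M : ℤ) - k := by omega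
    have hchi : chi n (t ∘ Fin.castSucc) (l + ((1 + (M - k) : ℕ) : ℤ)) =
        (-1:A)^(n+1) * (∏ i : Fin n, ((t (Fin.castSucc i) : Aˣ) : A)) *
        ∑ r ∈ Finset.Nat.antidiagonalTuple n k,
          ∏ i : Fin n, ((t (Fin.castSucc i) : Aˣ) : A) ^ r i := by
      rw [chi, if_neg (by omega), if_neg (by push_cast; omega)]
      have hdeg : (-(l + ((1 + (M - k) : ℕ) : ℤ)) - n).toNat = k := by omega
      rw [hdeg]
      rfl
    rw [hchi]
    have hsnoc : ∀ q : Fin n → ℕ,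
        (∏ i : Fin (n+1), ((t i : Aˣ) : A) ^ (Fin.snoc q (M - k) : Fin (n+1) → ℕ) i) =
        (∏ i : Fin n, ((t (Fin.castSucc i) : Aˣ) : A) ^ q i) *
          ((t (Fin.last n) : Aˣ) : A) ^ (M - k) := by
      intro q
      rw [Fin.prod_univ_castSucc]
      simp
    simp only [hsnoc]
    rw [Fin.prod_univ_castSucc (f := fun i => ((t i : Aˣ) : A))]
    rw [pow_succ (-1:A) (n+1), pow_add ((t (Fin.last n) : Aˣ) : A) 1 (M-k),
      ← Finset.sum_mul]
    ring
  · -- easy case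
    have hlhs : chi (n+1) t l = 0 := by
      rw [chi, if_neg h2, if_pos (by push_cast; omega)]
    rw [hlhs, eq_comm, neg_eq_zero]
    apply Finset.sum_eq_zero
    intro i hi
    rw [Finset.mem_Icc] at hi
    have h1 : ¬ (0 ≤ l + i) := by omega
    have h3 : -(n : ℤ) < l + i := by push_cast at hln ⊢; omega
    rw [chi, if_neg h1, if_pos h3, zero_mul]
end
end

section
/- Duality identity between B_{n,k}^j and B_{n,−k}^j (equation (4.14) in the proof of Proposition 4.13 of the paper). For all integers n ≥ 0, k ∈ ℤ and j ∈ ℤ, the following identity holds in the ring ℤ[t₁^{±1}, …, t_{n+1}^{±1}, t^{±1}]: (−1)^n (t₁⋯t_{n+1})^k t^{n+1} · B_{n,−k}^j(t₁, …, t_{n+1}, t^{−1}) = B_{n,k}^j(t₁, …, t_{n+1}, t) − χ_{n,j} · Π_{i=1}^{n+1} (1 − t_i^k t), where B_{n,±k}^j(t₁, …, t_{n+1}, u) denotes the result of substituting T = u in B_{n,±k}^j. -/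
open Finset

noncomputable section

namespace BDualAux


variable {A : Type*} [CommRing A]

/-- Complete homogeneous symmetric polynomial. -/
def H (m : ℕ) (f : Fin m → A) (p : ℕ) : A :=
  ∑ r ∈ Finset.Nat.antidiagonalTuple m p, ∏ i, f i ^ r i

lemma H_zero (m : ℕ) (f : Fin m → A) : H m f 0 = 1 := by
  simp [H, Finset.Nat.antidiagonalTuple_zero_right]

lemma H_succ_split (m p : ℕ) (f : Fin (m + 1) → A) :
    H (m + 1) f p = ∑ ab ∈ Finset.HasAntidiagonal.antidiagonal p, f 0 ^ ab.1 * H m (Fin.tail f) ab.2 := by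
  classical
  rw [H]
  have : ∀ ab : ℕ × ℕ, f 0 ^ ab.1 * H m (Fin.tail f) ab.2
      = ∑ s ∈ Finset.Nat.antidiagonalTuple m ab.2, f 0 ^ ab.1 * ∏ i, Fin.tail f i ^ s i := by
    intro ab; rw [H, Finset.mul_sum]
  simp_rw [this]
  rw [Finset.sum_sigma']
  refine Finset.sum_nbij' (fun r => ⟨(r 0, ∑ i, Fin.tail r i), Fin.tail r⟩)
    (fun x => Fin.cons x.1.1 x.2) ?_ ?_ ?_ ?_ ?_
  · intro r hr
    rw [Finset.Nat.mem_antidiagonalTuple] at hr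
    simp only [Finset.mem_sigma, Finset.HasAntidiagonal.mem_antidiagonal, Finset.Nat.mem_antidiagonalTuple]
    exact ⟨by rw [← hr, Fin.sum_univ_succ]; rfl, trivial⟩
  · intro x hx
    simp only [Finset.mem_sigma, Finset.HasAntidiagonal.mem_antidiagonal,
      Finset.Nat.mem_antidiagonalTuple] at hx ⊢
    rw [Fin.sum_cons, hx.2, hx.1]
  · intro r _
    exact Fin.cons_self_tail r
  · intro x hx
    simp only [Finset.mem_sigma, Finset.mem_antidiagonal,
      Finset.Nat.mem_antidiagonalTuple] at hx
    ext
    · simp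
    · simp [hx.2]
    · simp
  · intro r _
    rw [Fin.prod_univ_succ]
    rfl

lemma H_rec (m p : ℕ) (f : Fin (m + 1) → A) :
    H (m + 1) f (p + 1) = H m (Fin.tail f) (p + 1) + f 0 * H (m + 1) f p := by
  rw [H_succ_split m (p + 1) f, H_succ_split m p f, Finset.Nat.antidiagonal_succ,
    Finset.sum_cons, Finset.sum_map, Finset.mul_sum]
  simp [pow_succ, mul_assoc, mul_comm, mul_left_comm]



variable {A : Type*} [CommRing A]

lemma chi_nonneg (m : ℕ) (t : Fin m → Aˣ) (l : ℤ) (h : 0 ≤ l) :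
    chi m t l = H m (fun i => (((t i)⁻¹ : Aˣ) : A)) l.toNat := by
  rw [chi, if_pos h]; rfl

lemma chi_mid (m : ℕ) (t : Fin m → Aˣ) (l : ℤ) (h1 : l < 0) (h2 : -(m : ℤ) < l) :
    chi m t l = 0 := by
  rw [chi, if_neg (by omega), if_pos h2]

lemma chi_neg (m : ℕ) (t : Fin m → Aˣ) (l : ℤ) (h : l ≤ -(m : ℤ)) (h1 : l < 0) :
    chi m t l = (-1 : A) ^ (m + 1) * (∏ i, ((t i : Aˣ) : A)) *
      H m (fun i => ((t i : Aˣ) : A)) (-l - m).toNat := by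
  rw [chi, if_neg (by omega), if_neg (by omega)]; rfl

lemma chi_rec_one (t : Fin 1 → Aˣ) (l : ℤ) :
    chi 1 t l - (((t 0)⁻¹ : Aˣ) : A) * chi 1 t (l - 1) = 0 := by
  have hH : ∀ (f : Fin 1 → A) (p : ℕ), H 1 f p = f 0 ^ p := by
    intro f p
    rw [H, Finset.Nat.antidiagonalTuple_one, Finset.sum_singleton, Fin.prod_univ_one]
    rfl
  have hu : (((t 0)⁻¹ : Aˣ) : A) * ((t 0 : Aˣ) : A) = 1 := by
    rw [← Units.val_mul, inv_mul_cancel, Units.val_one]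
  rcases le_or_gt 1 l with hl | hl
  · rw [chi_nonneg 1 t l (by omega), chi_nonneg 1 t (l - 1) (by omega), hH, hH]
    have h2 : l.toNat = (l - 1).toNat + 1 := by omega
    rw [h2, pow_succ]
    ring
  rcases eq_or_lt_of_le (by omega : l ≤ 0) with rfl | hneg
  · rw [chi_nonneg 1 t 0 le_rfl, chi_neg 1 t (0 - 1) (by norm_num) (by norm_num), hH, hH]
    norm_num
  · rw [chi_neg 1 t l (by omega) hneg, chi_neg 1 t (l - 1) (by omega) (by omega), hH, hH,
      Fin.prod_univ_one]
    have h2 : (-(l - 1) - ((1 : ℕ) : ℤ)).toNat = (-l - ((1 : ℕ) : ℤ)).toNat + 1 := by omega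
    rw [h2, pow_succ]
    linear_combination (-(-1 : A) ^ (1 + 1) * ((t 0 : Aˣ) : A)
      * ((t 0 : Aˣ) : A) ^ (-l - ((1 : ℕ) : ℤ)).toNat) * hu

lemma chi_rec (m : ℕ) (hm : 1 ≤ m) (t : Fin (m + 1) → Aˣ) (l : ℤ) :
    chi (m + 1) t l - (((t 0)⁻¹ : Aˣ) : A) * chi (m + 1) t (l - 1) = chi m (Fin.tail t) l := by
  have hu : (((t 0)⁻¹ : Aˣ) : A) * ((t 0 : Aˣ) : A) = 1 := by
    rw [← Units.val_mul, inv_mul_cancel, Units.val_one]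
  have htail1 : Fin.tail (fun i : Fin (m + 1) => (((t i)⁻¹ : Aˣ) : A))
      = (fun i : Fin m => (((t i.succ)⁻¹ : Aˣ) : A)) := rfl
  have htail2 : Fin.tail (fun i : Fin (m + 1) => ((t i : Aˣ) : A))
      = (fun i : Fin m => ((t i.succ : Aˣ) : A)) := rfl
  rcases le_or_gt 1 l with hl | hl
  · -- positive case
    rw [chi_nonneg _ t l (by omega), chi_nonneg _ t (l - 1) (by omega),
      chi_nonneg m (Fin.tail t) l (by omega)]
    have h2 : l.toNat = (l - 1).toNat + 1 := by omega
    rw [h2, H_rec, htail1]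
    simp only [Fin.tail]
    ring
  rcases eq_or_lt_of_le (by omega : l ≤ 0) with rfl | hneg
  · rw [chi_nonneg _ t 0 le_rfl, chi_mid _ t (0 - 1) (by norm_num) (by push_cast; omega),
      chi_nonneg m (Fin.tail t) 0 le_rfl]
    simp [H_zero]
  rcases lt_or_ge (-(m : ℤ)) l with hmid | hmid
  · -- middle case
    rw [chi_mid _ t l (by omega) (by push_cast; omega),
      chi_mid _ t (l - 1) (by omega) (by push_cast; omega),
      chi_mid m (Fin.tail t) l (by omega) (by push_cast; omega)]
    ring
  rcases eq_or_lt_of_le hmid with rfl | hlow2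
  · -- l = -m
    rw [chi_mid _ t (-(m : ℤ)) (by omega) (by push_cast; omega),
      chi_neg _ t (-(m : ℤ) - 1) (by push_cast; omega) (by omega),
      chi_neg m (Fin.tail t) (-(m : ℤ)) (by omega) (by omega)]
    have e1 : (-(-(m : ℤ) - 1) - ((m + 1 : ℕ) : ℤ)).toNat = 0 := by omega
    have e2 : (-(-(m : ℤ)) - (m : ℕ)).toNat = 0 := by omega
    rw [e1, e2, H_zero, H_zero, Fin.prod_univ_succ]
    simp only [Fin.tail, pow_succ]
    linear_combination (-(-1 : A) ^ m * (∏ i : Fin m, ((t i.succ : Aˣ) : A))) * hu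
  · -- deep negative case
    rw [chi_neg _ t l (by push_cast; omega) (by omega),
      chi_neg _ t (l - 1) (by push_cast; omega) (by omega),
      chi_neg m (Fin.tail t) l (by omega) (by omega)]
    have e1 : (-(l - 1) - ((m + 1 : ℕ) : ℤ)).toNat = (-l - ((m + 1 : ℕ) : ℤ)).toNat + 1 := by
      omega
    have e3 : (-l - (m : ℕ)).toNat = (-l - ((m + 1 : ℕ) : ℤ)).toNat + 1 := by omega
    rw [e1, e3, H_rec, htail2, Fin.prod_univ_succ]
    simp only [Fin.tail, pow_succ]
    set Q := ∏ i : Fin m, ((t i.succ : Aˣ) : A) with hQ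
    set a := H (m + 1) (fun i : Fin (m + 1) => ((t i : Aˣ) : A)) (-l - ((m + 1 : ℕ) : ℤ)).toNat
      with ha
    set b := H m (fun i : Fin m => ((t i.succ : Aˣ) : A)) ((-l - ((m + 1 : ℕ) : ℤ)).toNat + 1)
      with hb
    linear_combination (-(-1 : A) ^ m * Q * b - (-1 : A) ^ m * ((t 0 : Aˣ) : A) * Q * a) * hu



variable {A : Type*} [CommRing A]

/-- Action of the shift algebra `A[ℤ]` on two-sided sequences. -/
def act (p : AddMonoidAlgebra A ℤ) (a : ℤ → A) (l : ℤ) : A :=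
  p.coeff.sum fun d c => c * a (l + d)

lemma act_single (d : ℤ) (c : A) (a : ℤ → A) (l : ℤ) :
    act (AddMonoidAlgebra.single d c) a l = c * a (l + d) := by
  rw [act, AddMonoidAlgebra.coeff_single, Finsupp.sum_single_index]
  simp

lemma act_zero (a : ℤ → A) (l : ℤ) : act 0 a l = 0 := by
  simp [act]

lemma act_add (p q : AddMonoidAlgebra A ℤ) (a : ℤ → A) (l : ℤ) :
    act (p + q) a l = act p a l + act q a l := by
  rw [act, act, act, AddMonoidAlgebra.coeff_add]
  exact Finsupp.sum_add_index (by simp) (by intros; simp [add_mul])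

lemma act_sub (p q : AddMonoidAlgebra A ℤ) (a : ℤ → A) (l : ℤ) :
    act (p - q) a l = act p a l - act q a l := by
  have := act_add (p - q) q a l
  rw [sub_add_cancel] at this
  linear_combination -this

lemma act_one (a : ℤ → A) (l : ℤ) : act 1 a l = a l := by
  rw [AddMonoidAlgebra.one_def, act_single]
  simp

lemma act_congr (p : AddMonoidAlgebra A ℤ) (a b : ℤ → A) (l : ℤ) (h : ∀ x, a x = b x) :
    act p a l = act p b l :=
  by unfold act; exact Finsupp.sum_congr fun d _ => by rw [h]

lemma act_single_mul (d : ℤ) (c : A) (q : AddMonoidAlgebra A ℤ) (a : ℤ → A) (l : ℤ) :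
    act (AddMonoidAlgebra.single d c * q) a l = c * act q a (l + d) := by
  induction q using AddMonoidAlgebra.induction_linear with
  | zero => simp [act_zero]
  | add f g hf hg => rw [mul_add, act_add, act_add, hf, hg, mul_add]
  | single e b =>
    rw [AddMonoidAlgebra.single_mul_single, act_single, act_single, add_assoc, mul_assoc]

lemma act_mul (p q : AddMonoidAlgebra A ℤ) (a : ℤ → A) (l : ℤ) :
    act (p * q) a l = act p (fun l' => act q a l') l := by
  induction p using AddMonoidAlgebra.induction_linear with
  | zero => simp [act_zero]
  | add f g hf hg => rw [add_mul, act_add, act_add, hf, hg]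
  | single d c => rw [act_single_mul, act_single]

lemma act_mul_zero (p q : AddMonoidAlgebra A ℤ) (a : ℤ → A)
    (hq : ∀ l, act q a l = 0) (l : ℤ) : act (p * q) a l = 0 := by
  rw [act_mul]
  have : (fun l' => act q a l') = fun _ => (0 : A) := funext hq
  rw [this, act]
  simp [Finsupp.sum]

lemma act_sum {ι : Type*} (s : Finset ι) (p : ι → AddMonoidAlgebra A ℤ) (a : ℤ → A) (l : ℤ) :
    act (∑ i ∈ s, p i) a l = ∑ i ∈ s, act (p i) a l := by
  classical
  induction s using Finset.cons_induction with
  | empty => simp [act_zero]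
  | cons i s hi ih => rw [Finset.sum_cons, act_add, ih, Finset.sum_cons]

/-- `1 - x⁻¹ S⁻¹` divides `1 - x^k S^k` in the shift algebra. -/
lemma pfac_dvd (x : Aˣ) (k : ℤ) :
    ∃ q : AddMonoidAlgebra A ℤ,
      (1 : AddMonoidAlgebra A ℤ) - AddMonoidAlgebra.single k ((x ^ k : Aˣ) : A)
        = ((1 : AddMonoidAlgebra A ℤ) - AddMonoidAlgebra.single (-1 : ℤ) ((x⁻¹ : Aˣ) : A)) * q := by
  set Y : AddMonoidAlgebra A ℤ := AddMonoidAlgebra.single (1 : ℤ) ((x : Aˣ) : A) with hY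
  set Z : AddMonoidAlgebra A ℤ := AddMonoidAlgebra.single (-1 : ℤ) ((x⁻¹ : Aˣ) : A) with hZ
  have hZY : Z * Y = 1 := by
    rw [hZ, hY, AddMonoidAlgebra.single_mul_single]
    norm_num
  have hYpow : ∀ n : ℕ, Y ^ n = AddMonoidAlgebra.single (n : ℤ) (((x : Aˣ) : A) ^ n) := by
    intro n
    rw [hY, AddMonoidAlgebra.single_pow]
    congr 1
    simp
  have hZpow : ∀ n : ℕ, Z ^ n = AddMonoidAlgebra.single (-(n : ℤ)) (((x⁻¹ : Aˣ) : A) ^ n) := by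
    intro n
    rw [hZ, AddMonoidAlgebra.single_pow]
    congr 1
    simp
  have hfac1 : (1 : AddMonoidAlgebra A ℤ) - Y = (1 - Z) * (-Y) := by
    rw [mul_neg, sub_mul, one_mul, hZY]
    ring
  obtain ⟨n, rfl | rfl⟩ := Int.eq_nat_or_neg k
  · refine ⟨-Y * ∑ i ∈ Finset.range n, Y ^ i, ?_⟩
    have hx : ((x ^ (n : ℤ) : Aˣ) : A) = ((x : Aˣ) : A) ^ n := by
      rw [zpow_natCast, Units.val_pow_eq_pow_val]
    rw [hx, ← hYpow, ← mul_assoc, ← hfac1]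
    have := geom_sum_mul Y n
    linear_combination this
  · refine ⟨∑ i ∈ Finset.range n, Z ^ i, ?_⟩
    have hx : ((x ^ (-(n : ℤ)) : Aˣ) : A) = ((x⁻¹ : Aˣ) : A) ^ n := by
      rw [zpow_neg, zpow_natCast, ← inv_pow, Units.val_pow_eq_pow_val]
    rw [hx, ← hZpow]
    have := geom_sum_mul Z n
    linear_combination this



variable {A : Type*} [CommRing A]

lemma ann_chi (m : ℕ) (t : Fin (m + 1) → Aˣ) (l : ℤ) :
    act (∏ i, ((1 : AddMonoidAlgebra A ℤ)
        - AddMonoidAlgebra.single (-1 : ℤ) (((t i)⁻¹ : Aˣ) : A)))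
      (chi (m + 1) t) l = 0 := by
  induction m with
  | zero =>
    rw [Fin.prod_univ_one, act_sub, act_one, act_single,
      show l + (-1 : ℤ) = l - 1 by ring]
    have := chi_rec_one t l
    linear_combination this
  | succ m ih =>
    rw [Fin.prod_univ_succ, mul_comm, act_mul]
    have hinner : ∀ l', act ((1 : AddMonoidAlgebra A ℤ)
        - AddMonoidAlgebra.single (-1 : ℤ) (((t 0)⁻¹ : Aˣ) : A)) (chi (m + 2) t) l'
        = chi (m + 1) (Fin.tail t) l' := by
      intro l'
      rw [act_sub, act_one, act_single, show l' + (-1 : ℤ) = l' - 1 by ring]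
      exact chi_rec (m + 1) (by omega) t l'
    rw [act_congr _ _ _ _ hinner]
    exact ih (Fin.tail t)

lemma prod_single {ι : Type*} (s : Finset ι) (k : ℤ) (x : ι → A) :
    ∏ i ∈ s, AddMonoidAlgebra.single k (x i)
      = AddMonoidAlgebra.single ((s.card : ℤ) * k) (∏ i ∈ s, x i) := by
  classical
  induction s using Finset.cons_induction with
  | empty =>
    rw [Finset.prod_empty, Finset.prod_empty, Finset.card_empty]
    norm_num
  | cons i s hi ih =>
    rw [Finset.prod_cons, ih, AddMonoidAlgebra.single_mul_single, Finset.prod_cons,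
      Finset.card_cons]
    congr 1
    push_cast
    ring

lemma key (m : ℕ) (t : Fin (m + 1) → Aˣ) (k c : ℤ) :
    ∑ d ∈ Finset.range (m + 2),
      (-1 : A) ^ d * esymm (m + 1) (tk t k) d * chi (m + 1) t ((d : ℤ) * k + c) = 0 := by
  classical
  have hexp : (∏ i : Fin (m + 1), ((1 : AddMonoidAlgebra A ℤ)
        - AddMonoidAlgebra.single k ((t i ^ k : Aˣ) : A)))
      = ∑ s ∈ (Finset.univ : Finset (Fin (m + 1))).powerset,
          AddMonoidAlgebra.single ((s.card : ℤ) * k)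
            ((-1 : A) ^ s.card * ∏ i ∈ s, ((t i ^ k : Aˣ) : A)) := by
    have h1 : ∀ i : Fin (m + 1), (1 : AddMonoidAlgebra A ℤ)
        - AddMonoidAlgebra.single k ((t i ^ k : Aˣ) : A)
        = AddMonoidAlgebra.single k (-((t i ^ k : Aˣ) : A)) + 1 := by
      intro i
      have hneg : (AddMonoidAlgebra.single k (-((t i ^ k : Aˣ) : A)) : AddMonoidAlgebra A ℤ)
          = -AddMonoidAlgebra.single k ((t i ^ k : Aˣ) : A) := AddMonoidAlgebra.single_neg _ _
      rw [hneg]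
      ring
    rw [Finset.prod_congr rfl (fun i _ => h1 i), Finset.prod_add]
    refine Finset.sum_congr rfl fun s _ => ?_
    rw [Finset.prod_const_one, mul_one, prod_single]
    congr 1
    rw [show (fun i => -((t i ^ k : Aˣ) : A)) = fun i => (-1 : A) * ((t i ^ k : Aˣ) : A)
      from funext fun i => by ring, Finset.prod_mul_distrib, Finset.prod_const]
  have hann : ∀ l, act (∏ i : Fin (m + 1), ((1 : AddMonoidAlgebra A ℤ)
      - AddMonoidAlgebra.single k ((t i ^ k : Aˣ) : A))) (chi (m + 1) t) l = 0 := by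
    intro l
    choose q hq using fun i : Fin (m + 1) => pfac_dvd (t i) k
    rw [Finset.prod_congr rfl (fun i _ => hq i), Finset.prod_mul_distrib, mul_comm]
    exact act_mul_zero _ _ _ (ann_chi m t) l
  have hthis := hann c
  rw [hexp, act_sum] at hthis
  simp only [act_single] at hthis
  rw [Finset.powerset_card_disjiUnion] at hthis
  erw [Finset.sum_disjiUnion] at hthis
  rw [Finset.card_fin] at hthis
  rw [← hthis]
  refine Finset.sum_congr rfl fun d hd => ?_
  rw [esymm, Finset.mul_sum, Finset.sum_mul]
  refine Finset.sum_congr rfl fun s hs => ?_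
  have hcard : s.card = d := (Finset.mem_powersetCard.mp hs).2
  rw [hcard, show (d : ℤ) * k + c = c + (d : ℤ) * k from by ring]
  rfl



variable {A : Type*} [CommRing A]

lemma units_coe_prod {ι : Type*} (s : Finset ι) (f : ι → Aˣ) :
    ((∏ i ∈ s, f i : Aˣ) : A) = ∏ i ∈ s, ((f i : Aˣ) : A) := by
  simpa using map_prod (Units.coeHom A) f s

lemma prod_one_sub (m : ℕ) (x : Fin m → A) (u : A) :
    ∏ i, (1 - x i * u) = ∑ d ∈ Finset.range (m + 1), (-1 : A) ^ d * esymm m x d * u ^ d := by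
  classical
  have h1 : ∀ i : Fin m, (1 : A) - x i * u = (-(x i * u)) + 1 := fun i => by ring
  rw [Finset.prod_congr rfl (fun i _ => h1 i), Finset.prod_add]
  rw [Finset.powerset_card_disjiUnion]
  erw [Finset.sum_disjiUnion]
  rw [Finset.card_fin]
  refine Finset.sum_congr rfl fun d hd => ?_
  rw [esymm, Finset.mul_sum, Finset.sum_mul]
  refine Finset.sum_congr rfl fun s hs => ?_
  have hcard : s.card = d := (Finset.mem_powersetCard.mp hs).2
  rw [Finset.prod_const_one, mul_one,
    show (fun i => -(x i * u)) = fun i => ((-1 : A) * u) * x i from funext fun i => by ring,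
    Finset.prod_mul_distrib, Finset.prod_const, hcard, mul_pow]
  ring

lemma esymm_compl (m : ℕ) (t : Fin m → Aˣ) (k : ℤ) (d : ℕ) (hd : d ≤ m) :
    (((∏ i, t i) ^ k : Aˣ) : A) * esymm m (tk t (-k)) d = esymm m (tk t k) (m - d) := by
  classical
  have hterm : ∀ s : Finset (Fin m),
      (((∏ i, t i) ^ k : Aˣ) : A) * ∏ i ∈ s, ((t i ^ (-k) : Aˣ) : A)
        = ∏ i ∈ sᶜ, ((t i ^ k : Aˣ) : A) := by
    intro s
    have hu : ((∏ i, t i) ^ k) * ∏ i ∈ s, (t i ^ (-k)) = ∏ i ∈ sᶜ, (t i ^ k) := by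
      rw [← Finset.prod_zpow]
      simp only [zpow_neg]
      rw [Finset.prod_inv_distrib,
        ← Finset.prod_mul_prod_compl s (fun i => t i ^ k),
        mul_comm (∏ i ∈ s, t i ^ k), mul_assoc, mul_inv_cancel, mul_one]
    calc (((∏ i, t i) ^ k : Aˣ) : A) * ∏ i ∈ s, ((t i ^ (-k) : Aˣ) : A)
        = ((((∏ i, t i) ^ k) * ∏ i ∈ s, (t i ^ (-k)) : Aˣ) : A) := by
          rw [Units.val_mul, units_coe_prod]
      _ = ∏ i ∈ sᶜ, ((t i ^ k : Aˣ) : A) := by rw [hu, units_coe_prod]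
  rw [esymm, esymm, Finset.mul_sum]
  refine Finset.sum_nbij' (fun s => sᶜ) (fun s => sᶜ) ?_ ?_ ?_ ?_ ?_
  · intro s hs
    rw [Finset.mem_powersetCard] at hs ⊢
    refine ⟨Finset.subset_univ _, ?_⟩
    rw [Finset.card_compl, Fintype.card_fin, hs.2]
  · intro s hs
    rw [Finset.mem_powersetCard] at hs ⊢
    refine ⟨Finset.subset_univ _, ?_⟩
    rw [Finset.card_compl, Fintype.card_fin, hs.2]
    omega
  · intro s _; exact compl_compl s
  · intro s _; exact compl_compl s
  · intro s _
    exact hterm s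


end BDualAux

open BDualAux

/-- duality identity between `B_{n,k}^j` and `B_{n,-k}^j`, equation (4.14)
in the proof of Proposition 4.13 of the paper.  In `ℤ[t₁^{±1},…,t_{n+1}^{±1},t^{±1}]`,
`(-1)^n (t₁⋯t_{n+1})^k t^{n+1} · B_{n,-k}^j(t⁻¹)
  = B_{n,k}^j(t) - χ_{n,j} · Π_{i=1}^{n+1} (1 - t_i^k t)`.  Here the additional Laurent
variable `t` is interpreted as a unit `u` of the commutative ring `A`. -/
theorem B_duality {A : Type*} [CommRing A]
    (n : ℕ) (k j : ℤ) (t : Fin (n + 1) → Aˣ) (u : Aˣ) :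
    (-1 : A) ^ n * (((∏ i, t i) ^ k : Aˣ) : A) * ((u : A)) ^ (n + 1) *
        Polynomial.eval (((u⁻¹ : Aˣ) : A)) (Bpoly (n + 1) t (-k) j) =
      Polynomial.eval ((u : A)) (Bpoly (n + 1) t k j) -
        chi (n + 1) t j * ∏ i, (1 - ((t i ^ k : Aˣ) : A) * (u : A)) := by
  classical
  have hEval : ∀ (k' : ℤ) (v : A), Polynomial.eval v (Bpoly (n + 1) t k' j)
      = ∑ l ∈ Finset.range (n + 1), Bcoeff (n + 1) t k' j l * v ^ l := by
    intro k' v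
    rw [Bpoly, Polynomial.eval_finset_sum]
    exact Finset.sum_congr rfl fun l _ => by simp
  set F : ℕ × ℕ → A := fun p => (-1 : A) ^ p.2 * esymm (n + 1) (tk t k) p.2 *
    chi (n + 1) t ((p.2 : ℤ) * k + (j - (p.1 : ℤ) * k)) * (u : A) ^ p.1 with hF
  set S : Finset (ℕ × ℕ) := Finset.range (n + 2) ×ˢ Finset.range (n + 2) with hS
  -- total sum is zero
  have hTot : ∑ p ∈ S, F p = 0 := by
    rw [hS, Finset.sum_product]
    refine Finset.sum_eq_zero fun l hl => ?_
    have hk := key n t k (j - (l : ℤ) * k)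
    calc ∑ d ∈ Finset.range (n + 2), F (l, d)
        = (∑ d ∈ Finset.range (n + 2), (-1 : A) ^ d * esymm (n + 1) (tk t k) d *
            chi (n + 1) t ((d : ℤ) * k + (j - (l : ℤ) * k))) * (u : A) ^ l := by
          rw [Finset.sum_mul]
      _ = 0 := by rw [hk, zero_mul]
  -- the strict lower part is the evaluation of `Bpoly k`
  have hLT : Polynomial.eval ((u : A)) (Bpoly (n + 1) t k j)
      = ∑ p ∈ S.filter (fun p => p.1 < p.2), -F p := by
    rw [hEval]
    have hB : ∀ l, Bcoeff (n + 1) t k j l * (u : A) ^ l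
        = ∑ i ∈ Finset.Icc 1 (n + 1 - l),
            ((-1 : A) ^ (i + l + 1) * chi (n + 1) t ((i : ℤ) * k + j) *
              esymm (n + 1) (tk t k) (i + l)) * (u : A) ^ l := by
      intro l
      rw [Bcoeff, Finset.sum_mul]
    rw [Finset.sum_congr rfl fun l _ => hB l, Finset.sum_sigma']
    refine Finset.sum_nbij' (fun a => (a.1, a.2 + a.1)) (fun p => ⟨p.1, p.2 - p.1⟩)
      ?_ ?_ ?_ ?_ ?_
    · intro a ha
      obtain ⟨l, i⟩ := a
      simp only [Finset.mem_sigma, Finset.mem_range, Finset.mem_Icc] at ha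
      simp only [hS, Finset.mem_filter, Finset.mem_product, Finset.mem_range]
      try dsimp only
      omega
    · intro p hp
      obtain ⟨p1, p2⟩ := p
      simp only [hS, Finset.mem_filter, Finset.mem_product, Finset.mem_range] at hp
      try dsimp only at hp
      simp only [Finset.mem_sigma, Finset.mem_range, Finset.mem_Icc]
      try dsimp only
      omega
    · intro a ha
      obtain ⟨l, i⟩ := a
      try dsimp only
      simp only [Nat.add_sub_cancel]
    · intro p hp
      obtain ⟨p1, p2⟩ := p
      simp only [hS, Finset.mem_filter, Finset.mem_product, Finset.mem_range] at hp
      try dsimp only at hp ⊢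
      have h1 : p2 - p1 + p1 = p2 := by omega
      rw [h1]
    · intro a ha
      obtain ⟨l, i⟩ := a
      simp only [Finset.mem_sigma, Finset.mem_range, Finset.mem_Icc] at ha
      simp only [hF]
      try dsimp only
      have hchi : ((i + l : ℕ) : ℤ) * k + (j - (l : ℤ) * k) = (i : ℤ) * k + j := by
        push_cast; ring
      rw [hchi, pow_succ]
      ring
  -- the diagonal is `chi j` times the product
  have hDG : chi (n + 1) t j * ∏ i, (1 - ((t i ^ k : Aˣ) : A) * (u : A))
      = ∑ p ∈ S.filter (fun p => p.1 = p.2), F p := by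
    rw [prod_one_sub (n + 1) (fun i => ((t i ^ k : Aˣ) : A)) (u : A), Finset.mul_sum]
    refine Finset.sum_nbij' (fun d => (d, d)) (fun p => p.1) ?_ ?_ ?_ ?_ ?_
    · intro d hd
      simp only [Finset.mem_range] at hd
      simp only [hS, Finset.mem_filter, Finset.mem_product, Finset.mem_range]
      exact ⟨⟨by omega, by omega⟩, trivial⟩
    · intro p hp
      obtain ⟨p1, p2⟩ := p
      simp only [hS, Finset.mem_filter, Finset.mem_product, Finset.mem_range] at hp
      try dsimp only at hp
      simp only [Finset.mem_range]
      omega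
    · intro d _; rfl
    · intro p hp
      obtain ⟨p1, p2⟩ := p
      simp only [hS, Finset.mem_filter, Finset.mem_product, Finset.mem_range] at hp
      try dsimp only at hp ⊢
      rw [hp.2]
    · intro d hd
      simp only [hF]
      have hchi : (d : ℤ) * k + (j - (d : ℤ) * k) = j := by ring
      rw [hchi]
      have he : esymm (n + 1) (fun i => ((t i ^ k : Aˣ) : A)) d = esymm (n + 1) (tk t k) d :=
        rfl
      rw [he]
      ring
  -- the strict upper part is the left-hand side
  have hGT : (-1 : A) ^ n * (((∏ i, t i) ^ k : Aˣ) : A) * ((u : A)) ^ (n + 1) *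
        Polynomial.eval (((u⁻¹ : Aˣ) : A)) (Bpoly (n + 1) t (-k) j)
      = ∑ p ∈ S.filter (fun p => p.2 < p.1), F p := by
    rw [hEval, Finset.mul_sum]
    have hB : ∀ l, (-1 : A) ^ n * (((∏ i, t i) ^ k : Aˣ) : A) * ((u : A)) ^ (n + 1) *
        (Bcoeff (n + 1) t (-k) j l * ((u⁻¹ : Aˣ) : A) ^ l)
        = ∑ i ∈ Finset.Icc 1 (n + 1 - l),
            (-1 : A) ^ n * (((∏ i, t i) ^ k : Aˣ) : A) * ((u : A)) ^ (n + 1) *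
              (((-1 : A) ^ (i + l + 1) * chi (n + 1) t ((i : ℤ) * (-k) + j) *
                esymm (n + 1) (tk t (-k)) (i + l)) * ((u⁻¹ : Aˣ) : A) ^ l) := by
      intro l
      rw [Bcoeff, Finset.sum_mul, Finset.mul_sum]
    rw [Finset.sum_congr rfl fun l _ => hB l, Finset.sum_sigma']
    refine Finset.sum_nbij' (fun a => (n + 1 - a.1, n + 1 - a.1 - a.2))
      (fun p => ⟨n + 1 - p.1, p.1 - p.2⟩) ?_ ?_ ?_ ?_ ?_
    · intro a ha
      obtain ⟨l, i⟩ := a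
      simp only [Finset.mem_sigma, Finset.mem_range, Finset.mem_Icc] at ha
      simp only [hS, Finset.mem_filter, Finset.mem_product, Finset.mem_range]
      try dsimp only
      omega
    · intro p hp
      obtain ⟨p1, p2⟩ := p
      simp only [hS, Finset.mem_filter, Finset.mem_product, Finset.mem_range] at hp
      try dsimp only at hp
      simp only [Finset.mem_sigma, Finset.mem_range, Finset.mem_Icc]
      try dsimp only
      omega
    · intro a ha
      obtain ⟨l, i⟩ := a
      simp only [Finset.mem_sigma, Finset.mem_range, Finset.mem_Icc] at ha
      try dsimp only at ha ⊢
      have h1 : n + 1 - (n + 1 - l) = l := by omega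
      have h2 : n + 1 - l - (n + 1 - l - i) = i := by omega
      simp only [h1, h2]
    · intro p hp
      obtain ⟨p1, p2⟩ := p
      simp only [hS, Finset.mem_filter, Finset.mem_product, Finset.mem_range] at hp
      try dsimp only at hp ⊢
      have h1 : n + 1 - (n + 1 - p1) = p1 := by omega
      rw [h1, show p1 - (p1 - p2) = p2 from by omega]
    · intro a ha
      obtain ⟨l, i⟩ := a
      simp only [Finset.mem_sigma, Finset.mem_range, Finset.mem_Icc] at ha
      try dsimp only at ha
      simp only [hF]
      try dsimp only
      have hsym := esymm_compl (n + 1) t k (i + l) (by omega)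
      have hidx : n + 1 - (i + l) = n + 1 - l - i := by omega
      rw [hidx] at hsym
      have hchi : ((n + 1 - l - i : ℕ) : ℤ) * k + (j - ((n + 1 - l : ℕ) : ℤ) * k)
          = (i : ℤ) * (-k) + j := by
        have e1 : ((n + 1 - l - i : ℕ) : ℤ) = (n : ℤ) + 1 - l - i := by omega
        have e2 : ((n + 1 - l : ℕ) : ℤ) = (n : ℤ) + 1 - l := by omega
        rw [e1, e2]; ring
      have hupow : ((u : A)) ^ (n + 1 - l) * ((u : A)) ^ l = ((u : A)) ^ (n + 1) := by
        rw [← pow_add]; congr 1; omega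
      have hu1 : ((u : A)) ^ l * (((u⁻¹ : Aˣ) : A)) ^ l = 1 := by
        rw [← mul_pow, Units.mul_inv, one_pow]
      have hsgn : ((-1 : A)) ^ n * (-1 : A) ^ (i + l + 1) = (-1 : A) ^ (n + 1 - l - i) := by
        rw [← pow_add, show n + (i + l + 1) = (n + 1 - l - i) + 2 * (i + l) from by omega,
          pow_add, pow_mul]
        norm_num
      rw [hchi, ← hsym, ← hupow]
      linear_combination ((-1 : A) ^ n * (-1 : A) ^ (i + l + 1) * (((∏ i, t i) ^ k : Aˣ) : A) *
          esymm (n + 1) (tk t (-k)) (i + l) * chi (n + 1) t ((i : ℤ) * (-k) + j) *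
          ((u : A)) ^ (n + 1 - l)) * hu1
        + ((((∏ i, t i) ^ k : Aˣ) : A) * esymm (n + 1) (tk t (-k)) (i + l) *
          chi (n + 1) t ((i : ℤ) * (-k) + j) * ((u : A)) ^ (n + 1 - l)) * hsgn
  -- combine the three pieces
  have hsplit := Finset.sum_filter_add_sum_filter_not S (fun p => p.2 < p.1) F
  have hsplit2 := Finset.sum_filter_add_sum_filter_not
    (S.filter (fun p => ¬ p.2 < p.1)) (fun p => p.1 < p.2) F
  have hset1 : (S.filter (fun p => ¬ p.2 < p.1)).filter (fun p => p.1 < p.2)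
      = S.filter (fun p => p.1 < p.2) := by
    ext p
    simp only [Finset.mem_filter]
    constructor
    · rintro ⟨⟨h1, _⟩, h3⟩; exact ⟨h1, h3⟩
    · rintro ⟨h1, h3⟩; exact ⟨⟨h1, by omega⟩, h3⟩
  have hset2 : (S.filter (fun p => ¬ p.2 < p.1)).filter (fun p => ¬ p.1 < p.2)
      = S.filter (fun p => p.1 = p.2) := by
    ext p
    simp only [Finset.mem_filter]
    constructor
    · rintro ⟨⟨h1, h2⟩, h3⟩; exact ⟨h1, by omega⟩
    · rintro ⟨h1, h3⟩; exact ⟨⟨h1, by omega⟩, by omega⟩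
  rw [hset1, hset2] at hsplit2
  have hneg : ∑ p ∈ S.filter (fun p => p.1 < p.2), -F p
      = -∑ p ∈ S.filter (fun p => p.1 < p.2), F p := Finset.sum_neg_distrib _
  rw [hGT, hLT, hDG, hneg]
  linear_combination hsplit + hTot + hsplit2
end
end
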